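/- arXiv:0910.1022 — 6 statements merged into one kernel-verified Lean document; each statement's English description precedes it below -/
import Mathlib

section
/- Let f : [0,∞] → [0,∞) be non-increasing with nonnegative finite values and f(∞)=0, and let α > 0. Then the ddCRP with decay f and parameter α is marginally invariant for every N ≥ 1 and every set of distances satisfying the relaxed triangle inequality (sequential or not) if and only if f is identically 0. In particular, when f ≡ 0 the ddCRP places probability one on the assignment in which every customer links to itself, so the induced partition consists almost surely of N singleton blocks, and this distribution is marginally invariant. -/
open scoped BigOperators ENNReal Classical

noncomputable section

/-- Weight that customer `i` assigns to linking to customer `j`: `α` for a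
self-link (`j = i`) and `f (d i j)` otherwise. -/
def ddcrpWeight {N : ℕ} (d : Fin N → Fin N → ℝ≥0∞) (f : ℝ≥0∞ → ℝ) (α : ℝ)
    (i j : Fin N) : ℝ :=
  if j = i then α else f (d i j)

/-- ddCRP probability of the assignment `c` for the sub-system consisting of the
customers in `S` (with the restricted distances). -/
def ddcrpProbOn {N : ℕ} (S : Finset (Fin N)) (d : Fin N → Fin N → ℝ≥0∞)
    (f : ℝ≥0∞ → ℝ) (α : ℝ) (c : Fin N → Fin N) : ℝ :=
  ∏ i ∈ S, ddcrpWeight d f α i (c i) / (α + ∑ j ∈ S.erase i, f (d i j))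

/-- ddCRP probability of the assignment `c` (all `N` customers). -/
def ddcrpProb {N : ℕ} (d : Fin N → Fin N → ℝ≥0∞) (f : ℝ≥0∞ → ℝ) (α : ℝ)
    (c : Fin N → Fin N) : ℝ :=
  ddcrpProbOn Finset.univ d f α c

/-- `sameTable c i j`: the finest equivalence relation relating each customer `a`
to `c a` holds between `i` and `j`. -/
def sameTable {N : ℕ} (c : Fin N → Fin N) : Fin N → Fin N → Prop :=
  Relation.EqvGen fun a b => b = c a

/-- The induced table partition `z(c)`: the set of equivalence classes of the
finest equivalence relation relating each `i` to `c i`. -/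
def tablePartition {N : ℕ} (c : Fin N → Fin N) : Set (Set (Fin N)) :=
  {B | ∃ i : Fin N, B = {j | sameTable c i j}}

/-- Delete customer `m` from a partition of `Fin N`: each block loses `m`, and a
block that becomes empty is discarded. -/
def deleteCustomer {N : ℕ} (m : Fin N) (π : Set (Set (Fin N))) : Set (Set (Fin N)) :=
  {B | B.Nonempty ∧ ∃ C ∈ π, B = C \ {m}}

/-- Marginal invariance of the ddCRP with distances `d`, decay `f` and parameter `α`:
for every customer `m`, the distribution of the partition obtained by sampling `c`
from the `N`-customer ddCRP, forming `z(c)` and deleting `m`, equals the distribution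
of the induced table partition under the ddCRP on the remaining `N - 1` customers
with the restricted distances.  The latter system is encoded by assignment vectors
`c` with `c m = m` and `c i ≠ m` for `i ≠ m`, weighted by the ddCRP probability on
the customer set `Finset.univ.erase m`; its induced partition is
`tablePartition c \ {{m}}`. -/
def MarginallyInvariant {N : ℕ} (d : Fin N → Fin N → ℝ≥0∞) (f : ℝ≥0∞ → ℝ)
    (α : ℝ) : Prop :=
  ∀ m : Fin N, ∀ π : Set (Set (Fin N)),
    (∑ c : Fin N → Fin N,
        Set.indicator {c | deleteCustomer m (tablePartition c) = π}
          (ddcrpProb d f α) c)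
      = ∑ c : Fin N → Fin N,
          Set.indicator
            {c | c m = m ∧ (∀ i : Fin N, i ≠ m → c i ≠ m) ∧
              tablePartition c \ {({m} : Set (Fin N))} = π}
            (ddcrpProbOn (Finset.univ.erase m) d f α) c

/-- The relaxed triangle inequality for `d̄ i j = min (d i j) (d j i)`: zero distances
chain to zero distances, and finite distances chain to finite distances. -/
def RelaxedTriangle {N : ℕ} (d : Fin N → Fin N → ℝ≥0∞) : Prop :=
  ∀ i j k : Fin N,
    (min (d i j) (d j i) = 0 → min (d j k) (d k j) = 0 → min (d i k) (d k i) = 0) ∧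
    (min (d i j) (d j i) ≠ ⊤ → min (d j k) (d k j) ≠ ⊤ → min (d i k) (d k i) ≠ ⊤)

/-! ### Auxiliary lemmas -/

section Aux

lemma sameTable_self {N : ℕ} (c : Fin N → Fin N) (i : Fin N) : sameTable c i i :=
  Relation.EqvGen.refl i

lemma sameTable_classes {N : ℕ} {c : Fin N → Fin N} {g : Fin N → Fin N}
    (hg : ∀ a, g (c a) = g a) {i j : Fin N} (h : sameTable c i j) : g i = g j := by
  induction h with
  | rel a b hab => rw [hab, hg]
  | refl => rfl
  | symm a b _ ih => exact ih.symm
  | trans a b e _ _ ih1 ih2 => exact ih1.trans ih2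

lemma sameTable_id {N : ℕ} {i j : Fin N} :
    sameTable (id : Fin N → Fin N) i j ↔ i = j := by
  constructor
  · intro h
    induction h with
    | rel a b hab => exact hab.symm
    | refl => rfl
    | symm a b _ ih => exact ih.symm
    | trans a b e _ _ ih1 ih2 => exact ih1.trans ih2
  · rintro rfl; exact sameTable_self _ _

lemma tablePartition_id {N : ℕ} :
    tablePartition (id : Fin N → Fin N) = {B | ∃ i : Fin N, B = {i}} := by
  unfold tablePartition
  ext B
  simp only [Set.mem_setOf_eq]
  constructor
  · rintro ⟨i, rfl⟩
    exact ⟨i, by ext j; simp [sameTable_id, eq_comm]⟩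
  · rintro ⟨i, rfl⟩
    exact ⟨i, by ext j; simp [sameTable_id, eq_comm]⟩

lemma del_id {N : ℕ} (m : Fin N) :
    deleteCustomer m (tablePartition (id : Fin N → Fin N))
      = tablePartition (id : Fin N → Fin N) \ {({m} : Set (Fin N))} := by
  rw [tablePartition_id]
  ext B
  simp only [deleteCustomer, Set.mem_setOf_eq, Set.mem_diff, Set.mem_singleton_iff]
  constructor
  · rintro ⟨hne, C, ⟨i, rfl⟩, rfl⟩
    by_cases him : i = m
    · subst him; simp at hne
    · have hm : m ∉ ({i} : Set (Fin N)) := by simp [Ne.symm him]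
      rw [Set.diff_singleton_eq_self hm]
      refine ⟨⟨i, rfl⟩, ?_⟩
      intro h
      exact him (Set.singleton_eq_singleton_iff.mp h)
  · rintro ⟨⟨i, rfl⟩, hBm⟩
    have him : i ≠ m := fun h => hBm (by rw [h])
    have hm : m ∉ ({i} : Set (Fin N)) := by simp [Ne.symm him]
    exact ⟨Set.singleton_nonempty i, {i}, ⟨i, rfl⟩, (Set.diff_singleton_eq_self hm).symm⟩

lemma probOn_zero_f {N : ℕ} (S : Finset (Fin N)) (d : Fin N → Fin N → ℝ≥0∞)
    {f : ℝ≥0∞ → ℝ} (h0 : ∀ x, f x = 0) {α : ℝ} (hα : 0 < α) (c : Fin N → Fin N) :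
    ddcrpProbOn S d f α c = if ∀ i ∈ S, c i = i then 1 else 0 := by
  unfold ddcrpProbOn
  split
  · rename_i h
    refine Finset.prod_eq_one fun i hi => ?_
    rw [h i hi]
    simp [ddcrpWeight, h0, div_self hα.ne']
  · rename_i h
    push_neg at h
    obtain ⟨i, hi, hci⟩ := h
    refine Finset.prod_eq_zero hi ?_
    simp [ddcrpWeight, hci, h0]

lemma prob_zero_f {N : ℕ} (d : Fin N → Fin N → ℝ≥0∞)
    {f : ℝ≥0∞ → ℝ} (h0 : ∀ x, f x = 0) {α : ℝ} (hα : 0 < α) (c : Fin N → Fin N) :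
    ddcrpProb d f α c = if c = id then 1 else 0 := by
  rw [ddcrpProb, probOn_zero_f _ d h0 hα]
  congr 1
  simp only [eq_iff_iff]
  constructor
  · intro h; funext i; exact h i (Finset.mem_univ i)
  · rintro rfl; intro i _; rfl

lemma mi_zero {N : ℕ} (d : Fin N → Fin N → ℝ≥0∞) {f : ℝ≥0∞ → ℝ}
    (h0 : ∀ x, f x = 0) {α : ℝ} (hα : 0 < α) : MarginallyInvariant d f α := by
  intro m π
  have hL : (∑ c : Fin N → Fin N,
      Set.indicator {c | deleteCustomer m (tablePartition c) = π} (ddcrpProb d f α) c)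
      = if deleteCustomer m (tablePartition (id : Fin N → Fin N)) = π then 1 else 0 := by
    rw [Finset.sum_eq_single (id : Fin N → Fin N)]
    · rw [Set.indicator_apply, prob_zero_f d h0 hα]
      simp [Set.mem_setOf_eq]
    · intro c _ hc
      rw [Set.indicator_apply, prob_zero_f d h0 hα, if_neg hc]
      simp
    · intro h; exact absurd (Finset.mem_univ _) h
  have hR : (∑ c : Fin N → Fin N,
      Set.indicator {c | c m = m ∧ (∀ i : Fin N, i ≠ m → c i ≠ m) ∧
        tablePartition c \ {({m} : Set (Fin N))} = π}
        (ddcrpProbOn (Finset.univ.erase m) d f α) c)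
      = if tablePartition (id : Fin N → Fin N) \ {({m} : Set (Fin N))} = π then 1
        else 0 := by
    rw [Finset.sum_eq_single (id : Fin N → Fin N)]
    · rw [Set.indicator_apply, probOn_zero_f _ d h0 hα]
      have h1 : ((id : Fin N → Fin N) ∈ {c | c m = m ∧ (∀ i : Fin N, i ≠ m → c i ≠ m) ∧
          tablePartition c \ {({m} : Set (Fin N))} = π})
          ↔ tablePartition (id : Fin N → Fin N) \ {({m} : Set (Fin N))} = π := by
        simp [Set.mem_setOf_eq]
      rw [if_congr h1 rfl rfl]
      split
      · simp
      · rfl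
    · intro c _ hc
      rw [Set.indicator_apply]
      split
      · rename_i hmem
        rw [probOn_zero_f _ d h0 hα, if_neg]
        intro hall
        apply hc
        funext i
        by_cases him : i = m
        · subst him; exact hmem.1
        · exact hall i (Finset.mem_erase.mpr ⟨him, Finset.mem_univ i⟩)
      · rfl
    · intro h; exact absurd (Finset.mem_univ _) h
  rw [hL, hR, del_id]

/-! ### The counterexample distances -/

/-- Counterexample distances on three customers. -/
def dd3 : Fin 3 → Fin 3 → ℝ≥0∞ := fun i j => if i = 2 ∧ j ≠ 2 then ⊤ else 0

lemma min_dd3 (i j : Fin 3) : min (dd3 i j) (dd3 j i) = 0 := by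
  unfold dd3
  by_cases h : i = 2 ∧ j ≠ 2
  · have h2 : ¬(j = 2 ∧ i ≠ 2) := by rintro ⟨hj, _⟩; exact h.2 hj
    rw [if_pos h, if_neg h2]
    simp
  · rw [if_neg h]
    simp

lemma relaxed_dd3 : RelaxedTriangle dd3 := by
  intro i j k
  refine ⟨fun _ _ => min_dd3 i k, fun _ _ => ?_⟩
  rw [min_dd3 i k]
  exact ENNReal.zero_ne_top

def e3 : Fin 3 × Fin 3 × Fin 3 ≃ (Fin 3 → Fin 3) where
  toFun p := ![p.1, p.2.1, p.2.2]
  invFun c := (c 0, c 1, c 2)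
  left_inv p := by simp
  right_inv c := by
    funext i
    fin_cases i <;> rfl

lemma sum_fn3 (F : (Fin 3 → Fin 3) → ℝ) :
    ∑ c : Fin 3 → Fin 3, F c = ∑ x : Fin 3, ∑ y : Fin 3, ∑ z : Fin 3, F ![x, y, z] := by
  rw [← Equiv.sum_comp e3 F, Fintype.sum_prod_type]
  apply Finset.sum_congr rfl
  intro x _
  rw [Fintype.sum_prod_type]
  rfl

section Eval

variable {f : ℝ≥0∞ → ℝ} {α : ℝ}

lemma fdd3 (hf_top : f ⊤ = 0) (i j : Fin 3) :
    f (dd3 i j) = if i = 2 ∧ j ≠ 2 then 0 else f 0 := by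
  unfold dd3; split <;> simp [hf_top]

lemma prob_eval (hf_top : f ⊤ = 0) (c : Fin 3 → Fin 3) :
    ddcrpProb dd3 f α c
      = ddcrpWeight dd3 f α 0 (c 0) / (α + (f 0 + f 0))
        * (ddcrpWeight dd3 f α 1 (c 1) / (α + (f 0 + f 0))
        * (ddcrpWeight dd3 f α 2 (c 2) / α)) := by
  rw [ddcrpProb, ddcrpProbOn, Fin.prod_univ_three,
    show ((Finset.univ : Finset (Fin 3)).erase 0) = {1, 2} from by decide,
    show ((Finset.univ : Finset (Fin 3)).erase 1) = {0, 2} from by decide,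
    show ((Finset.univ : Finset (Fin 3)).erase 2) = {0, 1} from by decide]
  rw [Finset.sum_pair (by decide), Finset.sum_pair (by decide), Finset.sum_pair (by decide)]
  rw [fdd3 hf_top 0 1, fdd3 hf_top 0 2, fdd3 hf_top 1 0, fdd3 hf_top 1 2,
    fdd3 hf_top 2 0, fdd3 hf_top 2 1]
  have h02 : ¬((0 : Fin 3) = 2) := by decide
  have h12 : ¬((1 : Fin 3) = 2) := by decide
  have h02' : (0 : Fin 3) ≠ 2 := by decide
  have h12' : (1 : Fin 3) ≠ 2 := by decide
  simp only [h02, h12, h02', h12', ne_eq, if_false, if_true, and_true, and_false,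
    not_false_iff, false_and, if_neg, not_true]
  ring

lemma probOn_eval (hf_top : f ⊤ = 0) (c : Fin 3 → Fin 3) :
    ddcrpProbOn ((Finset.univ : Finset (Fin 3)).erase 2) dd3 f α c
      = ddcrpWeight dd3 f α 0 (c 0) / (α + f 0)
        * (ddcrpWeight dd3 f α 1 (c 1) / (α + f 0)) := by
  rw [ddcrpProbOn, show ((Finset.univ : Finset (Fin 3)).erase 2) = {0, 1} from by decide,
    Finset.prod_pair (by decide),
    show ({0, 1} : Finset (Fin 3)).erase 0 = {1} from by decide,
    show ({0, 1} : Finset (Fin 3)).erase 1 = {0} from by decide,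
    Finset.sum_singleton, Finset.sum_singleton, fdd3 hf_top 0 1, fdd3 hf_top 1 0,
    if_neg (by decide), if_neg (by decide)]

lemma wself (i : Fin 3) : ddcrpWeight dd3 f α i i = α := if_pos rfl
lemma w01 : ddcrpWeight dd3 f α 0 1 = f 0 := by
  rw [ddcrpWeight, if_neg (by decide : ¬(1 : Fin 3) = 0),
    show dd3 0 1 = 0 from if_neg (by decide)]
lemma w02 : ddcrpWeight dd3 f α 0 2 = f 0 := by
  rw [ddcrpWeight, if_neg (by decide : ¬(2 : Fin 3) = 0),
    show dd3 0 2 = 0 from if_neg (by decide)]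
lemma w12 : ddcrpWeight dd3 f α 1 2 = f 0 := by
  rw [ddcrpWeight, if_neg (by decide : ¬(2 : Fin 3) = 1),
    show dd3 1 2 = 0 from if_neg (by decide)]
lemma w2ne (hf_top : f ⊤ = 0) (x : Fin 3) (hx : x ≠ 2) : ddcrpWeight dd3 f α 2 x = 0 := by
  rw [ddcrpWeight, if_neg hx, show dd3 2 x = ⊤ from if_pos ⟨rfl, hx⟩, hf_top]

lemma prob_c2 (hf_top : f ⊤ = 0) (c : Fin 3 → Fin 3) (h : c 2 ≠ 2) :
    ddcrpProb dd3 f α c = 0 := by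
  rw [ddcrpProb, ddcrpProbOn]
  apply Finset.prod_eq_zero (Finset.mem_univ (2 : Fin 3))
  rw [w2ne hf_top _ h, zero_div]

end Eval

/-! ### Partition analysis for the counterexample -/

/-- The target partition `{{0},{1}}`. -/
def pi0 : Set (Set (Fin 3)) := {({0} : Set (Fin 3)), ({1} : Set (Fin 3))}

lemma not_mem_del (c : Fin 3 → Fin 3) (h01 : sameTable c 0 1) :
    ¬ deleteCustomer 2 (tablePartition c) = pi0 := by
  intro hEq
  have hB : ({j | sameTable c 0 j} \ {2} : Set (Fin 3)) ∈ deleteCustomer 2 (tablePartition c) :=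
    ⟨⟨0, sameTable_self c 0, by decide⟩, {j | sameTable c 0 j}, ⟨0, rfl⟩, rfl⟩
  rw [hEq] at hB
  have h0 : (0 : Fin 3) ∈ ({j | sameTable c 0 j} \ {2} : Set (Fin 3)) :=
    ⟨sameTable_self c 0, by decide⟩
  have h1 : (1 : Fin 3) ∈ ({j | sameTable c 0 j} \ {2} : Set (Fin 3)) := ⟨h01, by decide⟩
  rcases hB with hB | hB
  · rw [hB] at h1; exact absurd h1 (by decide)
  · rw [hB] at h0; exact absurd h0 (by decide)

lemma not_mem_rhs (c : Fin 3 → Fin 3) (h01 : sameTable c 0 1) :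
    ¬ tablePartition c \ {({2} : Set (Fin 3))} = pi0 := by
  intro hEq
  have h0 : (0 : Fin 3) ∈ {j | sameTable c 0 j} := sameTable_self c 0
  have h1 : (1 : Fin 3) ∈ {j | sameTable c 0 j} := h01
  have hB : ({j | sameTable c 0 j} : Set (Fin 3)) ∈ tablePartition c \ {({2} : Set (Fin 3))} := by
    refine ⟨⟨0, rfl⟩, ?_⟩
    intro h
    rw [Set.mem_singleton_iff] at h
    rw [h] at h0
    exact absurd h0 (by decide)
  rw [hEq] at hB
  rcases hB with hB | hB
  · rw [hB] at h1; exact absurd h1 (by decide)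
  · rw [hB] at h0; exact absurd h0 (by decide)

lemma tpid_diff : tablePartition (id : Fin 3 → Fin 3) \ {({2} : Set (Fin 3))} = pi0 := by
  rw [tablePartition_id]
  ext B
  simp only [Set.mem_diff, Set.mem_setOf_eq, Set.mem_singleton_iff, pi0, Set.mem_insert_iff]
  constructor
  · rintro ⟨⟨i, rfl⟩, hne⟩
    fin_cases i
    · left; rfl
    · right; rfl
    · exact absurd rfl hne
  · rintro (rfl | rfl)
    · exact ⟨⟨0, rfl⟩, by
        intro h
        have h0 : (0 : Fin 3) ∈ ({0} : Set (Fin 3)) := rfl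
        rw [h] at h0
        exact absurd h0 (by decide)⟩
    · exact ⟨⟨1, rfl⟩, by
        intro h
        have h0 : (1 : Fin 3) ∈ ({1} : Set (Fin 3)) := rfl
        rw [h] at h0
        exact absurd h0 (by decide)⟩

lemma v012 : (![0, 1, 2] : Fin 3 → Fin 3) = id := by
  funext i; fin_cases i <;> rfl

lemma diff0 : (({0} : Set (Fin 3)) \ {2}) = ({0} : Set (Fin 3)) := by
  ext x; simp only [Set.mem_diff, Set.mem_singleton_iff, and_iff_left_iff_imp]
  rintro rfl; decide
lemma diff1 : (({1} : Set (Fin 3)) \ {2}) = ({1} : Set (Fin 3)) := by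
  ext x; simp only [Set.mem_diff, Set.mem_singleton_iff, and_iff_left_iff_imp]
  rintro rfl; decide
lemma diff12 : (({1, 2} : Set (Fin 3)) \ {2}) = ({1} : Set (Fin 3)) := by
  ext x
  simp only [Set.mem_diff, Set.mem_insert_iff, Set.mem_singleton_iff]
  constructor
  · rintro ⟨rfl | rfl, hne⟩
    · rfl
    · exact absurd rfl hne
  · rintro rfl; exact ⟨Or.inl rfl, by decide⟩
lemma diff02 : (({0, 2} : Set (Fin 3)) \ {2}) = ({0} : Set (Fin 3)) := by
  ext x
  simp only [Set.mem_diff, Set.mem_insert_iff, Set.mem_singleton_iff]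
  constructor
  · rintro ⟨rfl | rfl, hne⟩
    · rfl
    · exact absurd rfl hne
  · rintro rfl; exact ⟨Or.inl rfl, by decide⟩

section c022
def c022 : Fin 3 → Fin 3 := ![0, 2, 2]
lemma hg022 : ∀ a, (![0, 1, 1] : Fin 3 → Fin 3) (c022 a) = ![0, 1, 1] a := by decide
lemma st12_022 : sameTable c022 1 2 := Relation.EqvGen.rel 1 2 rfl
lemma cls0_022 : {j | sameTable c022 0 j} = ({0} : Set (Fin 3)) := by
  ext j
  simp only [Set.mem_setOf_eq, Set.mem_singleton_iff]
  constructor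
  · intro h
    have hgj := sameTable_classes hg022 h
    fin_cases j
    · rfl
    · exact absurd hgj (by decide)
    · exact absurd hgj (by decide)
  · rintro rfl; exact sameTable_self _ _
lemma cls1_022 : {j | sameTable c022 1 j} = ({1, 2} : Set (Fin 3)) := by
  ext j
  simp only [Set.mem_setOf_eq, Set.mem_insert_iff, Set.mem_singleton_iff]
  constructor
  · intro h
    have hgj := sameTable_classes hg022 h
    fin_cases j
    · exact absurd hgj (by decide)
    · left; rfl
    · right; rfl
  · rintro (rfl | rfl)
    · exact sameTable_self _ _
    · exact st12_022
lemma cls2_022 : {j | sameTable c022 2 j} = ({1, 2} : Set (Fin 3)) := by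
  ext j
  simp only [Set.mem_setOf_eq, Set.mem_insert_iff, Set.mem_singleton_iff]
  constructor
  · intro h
    have hgj := sameTable_classes hg022 h
    fin_cases j
    · exact absurd hgj (by decide)
    · left; rfl
    · right; rfl
  · rintro (rfl | rfl)
    · exact Relation.EqvGen.symm _ _ st12_022
    · exact sameTable_self _ _
lemma tp022 : tablePartition c022 = {({0} : Set (Fin 3)), ({1, 2} : Set (Fin 3))} := by
  ext B
  simp only [tablePartition, Set.mem_setOf_eq, Set.mem_insert_iff, Set.mem_singleton_iff]
  constructor
  · rintro ⟨i, rfl⟩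
    fin_cases i
    · left; exact cls0_022
    · right; exact cls1_022
    · right; exact cls2_022
  · rintro (rfl | rfl)
    · exact ⟨0, cls0_022.symm⟩
    · exact ⟨1, cls1_022.symm⟩
lemma del022 : deleteCustomer 2 (tablePartition c022) = pi0 := by
  rw [tp022]
  ext B
  simp only [deleteCustomer, Set.mem_setOf_eq, Set.mem_insert_iff, Set.mem_singleton_iff, pi0]
  constructor
  · rintro ⟨hne, C, (rfl | rfl), rfl⟩
    · left; exact diff0
    · right; exact diff12
  · rintro (rfl | rfl)
    · exact ⟨Set.singleton_nonempty _, {0}, Or.inl rfl, diff0.symm⟩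
    · exact ⟨Set.singleton_nonempty _, {1, 2}, Or.inr rfl, diff12.symm⟩
end c022

section c212
def c212 : Fin 3 → Fin 3 := ![2, 1, 2]
lemma hg212 : ∀ a, (![0, 1, 0] : Fin 3 → Fin 3) (c212 a) = ![0, 1, 0] a := by decide
lemma st02_212 : sameTable c212 0 2 := Relation.EqvGen.rel 0 2 rfl
lemma cls0_212 : {j | sameTable c212 0 j} = ({0, 2} : Set (Fin 3)) := by
  ext j
  simp only [Set.mem_setOf_eq, Set.mem_insert_iff, Set.mem_singleton_iff]
  constructor
  · intro h
    have hgj := sameTable_classes hg212 h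
    fin_cases j
    · left; rfl
    · exact absurd hgj (by decide)
    · right; rfl
  · rintro (rfl | rfl)
    · exact sameTable_self _ _
    · exact st02_212
lemma cls1_212 : {j | sameTable c212 1 j} = ({1} : Set (Fin 3)) := by
  ext j
  simp only [Set.mem_setOf_eq, Set.mem_singleton_iff]
  constructor
  · intro h
    have hgj := sameTable_classes hg212 h
    fin_cases j
    · exact absurd hgj (by decide)
    · rfl
    · exact absurd hgj (by decide)
  · rintro rfl; exact sameTable_self _ _
lemma cls2_212 : {j | sameTable c212 2 j} = ({0, 2} : Set (Fin 3)) := by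
  ext j
  simp only [Set.mem_setOf_eq, Set.mem_insert_iff, Set.mem_singleton_iff]
  constructor
  · intro h
    have hgj := sameTable_classes hg212 h
    fin_cases j
    · left; rfl
    · exact absurd hgj (by decide)
    · right; rfl
  · rintro (rfl | rfl)
    · exact Relation.EqvGen.symm _ _ st02_212
    · exact sameTable_self _ _
lemma tp212 : tablePartition c212 = {({0, 2} : Set (Fin 3)), ({1} : Set (Fin 3))} := by
  ext B
  simp only [tablePartition, Set.mem_setOf_eq, Set.mem_insert_iff, Set.mem_singleton_iff]
  constructor
  · rintro ⟨i, rfl⟩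
    fin_cases i
    · left; exact cls0_212
    · right; exact cls1_212
    · left; exact cls2_212
  · rintro (rfl | rfl)
    · exact ⟨0, cls0_212.symm⟩
    · exact ⟨1, cls1_212.symm⟩
lemma del212 : deleteCustomer 2 (tablePartition c212) = pi0 := by
  rw [tp212]
  ext B
  simp only [deleteCustomer, Set.mem_setOf_eq, Set.mem_insert_iff, Set.mem_singleton_iff, pi0]
  constructor
  · rintro ⟨hne, C, (rfl | rfl), rfl⟩
    · left; exact diff02
    · right; exact diff1
  · rintro (rfl | rfl)
    · exact ⟨Set.singleton_nonempty _, {0, 2}, Or.inl rfl, diff02.symm⟩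
    · exact ⟨Set.singleton_nonempty _, {1}, Or.inr rfl, diff1.symm⟩
end c212

lemma del022' : deleteCustomer 2 (tablePartition (![0, 2, 2] : Fin 3 → Fin 3)) = pi0 := del022
lemma del212' : deleteCustomer 2 (tablePartition (![2, 1, 2] : Fin 3 → Fin 3)) = pi0 := del212

lemma del012 : deleteCustomer 2 (tablePartition (![0, 1, 2] : Fin 3 → Fin 3)) = pi0 := by
  rw [v012, del_id (2 : Fin 3), tpid_diff]

end Aux

section Main

lemma f0_zero {f : ℝ≥0∞ → ℝ} (hf_top : f ⊤ = 0) (hf0 : 0 ≤ f 0) {α : ℝ} (hα : 0 < α)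
    (hMI : MarginallyInvariant dd3 f α) : f 0 = 0 := by
  have h := hMI 2 pi0
  rw [sum_fn3, sum_fn3] at h
  -- LHS: terms with c 2 ≠ 2 are zero (their probability vanishes)
  have hL0 : ∀ x y : Fin 3,
      Set.indicator {c : Fin 3 → Fin 3 | deleteCustomer 2 (tablePartition c) = pi0}
        (ddcrpProb dd3 f α) ![x, y, 0] = 0 := by
    intro x y
    rw [Set.indicator_apply]
    split
    · exact prob_c2 hf_top _ (by intro hq; exact absurd (show (0 : Fin 3) = 2 from hq) (by decide))
    · rfl
  have hL1 : ∀ x y : Fin 3,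
      Set.indicator {c : Fin 3 → Fin 3 | deleteCustomer 2 (tablePartition c) = pi0}
        (ddcrpProb dd3 f α) ![x, y, 1] = 0 := by
    intro x y
    rw [Set.indicator_apply]
    split
    · exact prob_c2 hf_top _ (by intro hq; exact absurd (show (1 : Fin 3) = 2 from hq) (by decide))
    · rfl
  -- LHS: nonmembers because 0 and 1 share a table
  have hnm : ∀ c : Fin 3 → Fin 3, sameTable c 0 1 →
      Set.indicator {c : Fin 3 → Fin 3 | deleteCustomer 2 (tablePartition c) = pi0}
        (ddcrpProb dd3 f α) c = 0 :=
    fun c hst => Set.indicator_of_notMem (s := {c : Fin 3 → Fin 3 | deleteCustomer 2 (tablePartition c) = pi0}) (not_mem_del c hst) _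
  have e102 := hnm ![1, 0, 2] (Relation.EqvGen.rel 0 1 rfl)
  have e112 := hnm ![1, 1, 2] (Relation.EqvGen.rel 0 1 rfl)
  have e122 := hnm ![1, 2, 2] (Relation.EqvGen.rel 0 1 rfl)
  have e002 := hnm ![0, 0, 2] (Relation.EqvGen.symm _ _ (Relation.EqvGen.rel 1 0 rfl))
  have e202 := hnm ![2, 0, 2] (Relation.EqvGen.symm _ _ (Relation.EqvGen.rel 1 0 rfl))
  have e222 := hnm ![2, 2, 2] (Relation.EqvGen.trans _ _ _ (Relation.EqvGen.rel 0 2 rfl)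
    (Relation.EqvGen.symm _ _ (Relation.EqvGen.rel 1 2 rfl)))
  -- LHS: the three members
  have m012 :
      Set.indicator {c : Fin 3 → Fin 3 | deleteCustomer 2 (tablePartition c) = pi0}
        (ddcrpProb dd3 f α) ![0, 1, 2]
      = α / (α + (f 0 + f 0)) * (α / (α + (f 0 + f 0)) * (α / α)) := by
    rw [Set.indicator_of_mem (s := {c : Fin 3 → Fin 3 | deleteCustomer 2 (tablePartition c) = pi0}) del012, prob_eval hf_top,
      show (![0, 1, 2] : Fin 3 → Fin 3) 0 = 0 from rfl,
      show (![0, 1, 2] : Fin 3 → Fin 3) 1 = 1 from rfl,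
      show (![0, 1, 2] : Fin 3 → Fin 3) 2 = 2 from rfl, wself, wself, wself]
  have m022 :
      Set.indicator {c : Fin 3 → Fin 3 | deleteCustomer 2 (tablePartition c) = pi0}
        (ddcrpProb dd3 f α) ![0, 2, 2]
      = α / (α + (f 0 + f 0)) * (f 0 / (α + (f 0 + f 0)) * (α / α)) := by
    rw [Set.indicator_of_mem (s := {c : Fin 3 → Fin 3 | deleteCustomer 2 (tablePartition c) = pi0}) del022', prob_eval hf_top,
      show (![0, 2, 2] : Fin 3 → Fin 3) 0 = 0 from rfl,
      show (![0, 2, 2] : Fin 3 → Fin 3) 1 = 2 from rfl,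
      show (![0, 2, 2] : Fin 3 → Fin 3) 2 = 2 from rfl, wself, w12, wself]
  have m212 :
      Set.indicator {c : Fin 3 → Fin 3 | deleteCustomer 2 (tablePartition c) = pi0}
        (ddcrpProb dd3 f α) ![2, 1, 2]
      = f 0 / (α + (f 0 + f 0)) * (α / (α + (f 0 + f 0)) * (α / α)) := by
    rw [Set.indicator_of_mem (s := {c : Fin 3 → Fin 3 | deleteCustomer 2 (tablePartition c) = pi0}) del212', prob_eval hf_top,
      show (![2, 1, 2] : Fin 3 → Fin 3) 0 = 2 from rfl,
      show (![2, 1, 2] : Fin 3 → Fin 3) 1 = 1 from rfl,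
      show (![2, 1, 2] : Fin 3 → Fin 3) 2 = 2 from rfl, w02, wself, wself]
  -- RHS: terms with c 2 ≠ 2 are not in the set
  have hR0 : ∀ x y : Fin 3,
      Set.indicator {c : Fin 3 → Fin 3 | c 2 = 2 ∧ (∀ i : Fin 3, i ≠ 2 → c i ≠ 2) ∧
        tablePartition c \ {({2} : Set (Fin 3))} = pi0}
        (ddcrpProbOn (Finset.univ.erase 2) dd3 f α) ![x, y, 0] = 0 := by
    intro x y
    apply Set.indicator_of_notMem
    intro hm
    exact absurd (show (0 : Fin 3) = 2 from hm.1) (by decide)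
  have hR1 : ∀ x y : Fin 3,
      Set.indicator {c : Fin 3 → Fin 3 | c 2 = 2 ∧ (∀ i : Fin 3, i ≠ 2 → c i ≠ 2) ∧
        tablePartition c \ {({2} : Set (Fin 3))} = pi0}
        (ddcrpProbOn (Finset.univ.erase 2) dd3 f α) ![x, y, 1] = 0 := by
    intro x y
    apply Set.indicator_of_notMem
    intro hm
    exact absurd (show (1 : Fin 3) = 2 from hm.1) (by decide)
  -- RHS: terms with c 0 = 2 or c 1 = 2 are not in the set
  have hRx : ∀ y : Fin 3,
      Set.indicator {c : Fin 3 → Fin 3 | c 2 = 2 ∧ (∀ i : Fin 3, i ≠ 2 → c i ≠ 2) ∧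
        tablePartition c \ {({2} : Set (Fin 3))} = pi0}
        (ddcrpProbOn (Finset.univ.erase 2) dd3 f α) ![2, y, 2] = 0 := by
    intro y
    apply Set.indicator_of_notMem
    intro hm
    exact hm.2.1 0 (by decide) rfl
  have hRy : ∀ x : Fin 3, x ≠ 2 →
      Set.indicator {c : Fin 3 → Fin 3 | c 2 = 2 ∧ (∀ i : Fin 3, i ≠ 2 → c i ≠ 2) ∧
        tablePartition c \ {({2} : Set (Fin 3))} = pi0}
        (ddcrpProbOn (Finset.univ.erase 2) dd3 f α) ![x, 2, 2] = 0 := by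
    intro x _
    apply Set.indicator_of_notMem
    intro hm
    exact hm.2.1 1 (by decide) rfl
  have hRnm : ∀ c : Fin 3 → Fin 3, sameTable c 0 1 →
      Set.indicator {c : Fin 3 → Fin 3 | c 2 = 2 ∧ (∀ i : Fin 3, i ≠ 2 → c i ≠ 2) ∧
        tablePartition c \ {({2} : Set (Fin 3))} = pi0}
        (ddcrpProbOn (Finset.univ.erase 2) dd3 f α) c = 0 :=
    fun c hst => Set.indicator_of_notMem (s := {c : Fin 3 → Fin 3 | c 2 = 2 ∧ (∀ i : Fin 3, i ≠ 2 → c i ≠ 2) ∧ tablePartition c \ {({2} : Set (Fin 3))} = pi0}) (fun hm => not_mem_rhs c hst hm.2.2) _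
  have r002 := hRnm ![0, 0, 2] (Relation.EqvGen.symm _ _ (Relation.EqvGen.rel 1 0 rfl))
  have r102 := hRnm ![1, 0, 2] (Relation.EqvGen.rel 0 1 rfl)
  have r112 := hRnm ![1, 1, 2] (Relation.EqvGen.rel 0 1 rfl)
  have r022 := hRy 0 (by decide)
  have r122 := hRy 1 (by decide)
  -- RHS: the unique member
  have r012 :
      Set.indicator {c : Fin 3 → Fin 3 | c 2 = 2 ∧ (∀ i : Fin 3, i ≠ 2 → c i ≠ 2) ∧
        tablePartition c \ {({2} : Set (Fin 3))} = pi0}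
        (ddcrpProbOn (Finset.univ.erase 2) dd3 f α) ![0, 1, 2]
      = α / (α + f 0) * (α / (α + f 0)) := by
    have hmem : (![0, 1, 2] : Fin 3 → Fin 3) ∈
        {c : Fin 3 → Fin 3 | c 2 = 2 ∧ (∀ i : Fin 3, i ≠ 2 → c i ≠ 2) ∧
          tablePartition c \ {({2} : Set (Fin 3))} = pi0} :=
      ⟨rfl, by decide, by rw [v012]; exact tpid_diff⟩
    rw [Set.indicator_of_mem hmem, probOn_eval hf_top,
      show (![0, 1, 2] : Fin 3 → Fin 3) 0 = 0 from rfl,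
      show (![0, 1, 2] : Fin 3 → Fin 3) 1 = 1 from rfl, wself, wself]
  simp only [Fin.sum_univ_three, hL0, hL1, hR0, hR1, hRx, e102, e112, e122, e002, e202,
    e222, m012, m022, m212, r002, r102, r112, r022, r122, r012, add_zero, zero_add] at h
  have hD : (0 : ℝ) < α + (f 0 + f 0) := by linarith
  have hE : (0 : ℝ) < α + f 0 := by linarith
  rw [div_self hα.ne'] at h
  field_simp at h
  have hkey : α ^ 2 * f 0 ^ 2 + 2 * α * f 0 ^ 3 = 0 := by linear_combination α * h
  rcases eq_or_lt_of_le hf0 with h' | h'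
  · exact h'.symm
  · exfalso
    nlinarith [mul_pos (mul_pos hα hα) (mul_pos h' h'),
      mul_pos (mul_pos (mul_pos hα h') h') h']

end Main

/-- a decay function `f` (non-increasing, nonnegative finite values,
`f ⊤ = 0`) with parameter `α > 0` yields a ddCRP that is marginally invariant for
every `N ≥ 1` and every set of distances (sequential or not) satisfying the relaxed
triangle inequality if and only if `f` is identically `0`; and when `f ≡ 0` the
ddCRP puts probability one on the identity assignment, so that the induced
partition almost surely consists of the `N` singleton blocks (a marginally
invariant distribution, as the iff records). -/
theorem stmt7 (f : ℝ≥0∞ → ℝ) (hf_anti : Antitone f) (hf_nonneg : ∀ x, 0 ≤ f x)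
    (hf_top : f ⊤ = 0) (α : ℝ) (hα : 0 < α) :
    ((∀ N : ℕ, 1 ≤ N → ∀ d : Fin N → Fin N → ℝ≥0∞,
        RelaxedTriangle d → MarginallyInvariant d f α)
      ↔ ∀ x : ℝ≥0∞, f x = 0) ∧
    ((∀ x : ℝ≥0∞, f x = 0) →
      ∀ (N : ℕ) (d : Fin N → Fin N → ℝ≥0∞),
        (∀ c : Fin N → Fin N, ddcrpProb d f α c = if c = id then 1 else 0) ∧
        tablePartition (id : Fin N → Fin N) = {B | ∃ i : Fin N, B = {i}}) := by
  constructor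
  · constructor
    · intro H
      have hMI := H 3 (by norm_num) dd3 relaxed_dd3
      have h0 : f 0 = 0 := f0_zero hf_top (hf_nonneg 0) hα hMI
      intro x
      refine le_antisymm ?_ (hf_nonneg x)
      calc f x ≤ f 0 := hf_anti (zero_le : (0 : ℝ≥0∞) ≤ x)
        _ = 0 := h0
    · intro h0 N _ d _
      exact mi_zero d h0 hα
  · intro h0 N d
    exact ⟨fun c => prob_zero_f d h0 hα c, tablePartition_id⟩
end
end

section
/- Let n ≥ 1 and consider n+1 customers with all pairwise distances equal to 0, decay function f, and parameter α > 0. Set p = α/(α + n·f(0)) and q = f(0)/(α + n·f(0)), so each customer links to itself with probability p and to any given other customer with probability q. Then the probability under the ddCRP that customers 1,…,n lie in n pairwise distinct blocks of the induced table partition z(c) equals p^n + n·p^{n−1}·q·(p + q). (The two contributing events are: all of 1,…,n self-link; or exactly one of 1,…,n links to customer n+1 while the others self-link, and customer n+1 links either to itself or back to that customer.) -/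
open scoped BigOperators ENNReal Classical

noncomputable section

/-! ### Auxiliary material for the proof of `stmt11` -/

/-- Assignment where every customer except possibly the last self-links and the
last customer links to `t`. -/
def cA (n : ℕ) (t : Fin (n + 1)) : Fin (n + 1) → Fin (n + 1) :=
  fun v => if v = Fin.last n then t else v

/-- Assignment where customer `i.castSucc` links to the last customer, every
other non-last customer self-links, and the last customer links back to `i`
(if `b`) or to itself (if not). -/
def cB (n : ℕ) (i : Fin n) (b : Bool) : Fin (n + 1) → Fin (n + 1) :=
  fun v => if v = Fin.last n then (if b then i.castSucc else Fin.last n)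
    else if v = i.castSucc then Fin.last n else v

/-- Parametrization of the good assignments. -/
def goodParam (n : ℕ) : (Fin (n + 1) ⊕ Fin n × Bool) → (Fin (n + 1) → Fin (n + 1)) :=
  Sum.elim (cA n) (fun kb => cB n kb.1 kb.2)

lemma sameTable_eq_of_invariant {N : ℕ} (c : Fin N → Fin N) (g : Fin N → Fin N)
    (hg : ∀ a, g (c a) = g a) {i j : Fin N} (h : sameTable c i j) : g i = g j := by
  induction h with
  | rel a b hab => subst hab; exact (hg a).symm
  | refl a => rfl
  | symm a b _ ih => exact ih.symm
  | trans a b c' _ _ ih1 ih2 => exact ih1.trans ih2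

lemma sameTable_step {N : ℕ} (c : Fin N → Fin N) (a : Fin N) :
    sameTable c a (c a) := Relation.EqvGen.rel _ _ rfl

/-- with `n + 1` customers, all pairwise distances `0`,
`p = α/(α + n f(0))` and `q = f(0)/(α + n f(0))`, the ddCRP probability that the
first `n` customers lie in `n` pairwise distinct blocks of the induced table
partition equals `pⁿ + n pⁿ⁻¹ q (p + q)`. -/
theorem stmt11 (n : ℕ) (hn : 1 ≤ n)
    (f : ℝ≥0∞ → ℝ) (hf_anti : Antitone f) (hf_nonneg : ∀ x, 0 ≤ f x)
    (hf_top : f ⊤ = 0) (α : ℝ) (hα : 0 < α)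
    (d : Fin (n + 1) → Fin (n + 1) → ℝ≥0∞) (hd : ∀ i j : Fin (n + 1), d i j = 0)
    (p q : ℝ) (hp : p = α / (α + (n : ℝ) * f 0))
    (hq : q = f 0 / (α + (n : ℝ) * f 0)) :
    (∑ c : Fin (n + 1) → Fin (n + 1),
        Set.indicator
          {c | ∀ i j : Fin (n + 1), i ≠ Fin.last n → j ≠ Fin.last n → i ≠ j →
            ¬ sameTable c i j}
          (ddcrpProb d f α) c)
      = p ^ n + (n : ℝ) * p ^ (n - 1) * q * (p + q) := by
  classical
  have hD : (0 : ℝ) < α + (n : ℝ) * f 0 := by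
    have h1 : (0:ℝ) ≤ (n : ℝ) * f 0 :=
      mul_nonneg (Nat.cast_nonneg n) (hf_nonneg 0)
    linarith
  set E : Set (Fin (n + 1) → Fin (n + 1)) :=
    {c | ∀ i j : Fin (n + 1), i ≠ Fin.last n → j ≠ Fin.last n → i ≠ j →
      ¬ sameTable c i j} with hE
  -- probability formula
  have prob_eq : ∀ c : Fin (n + 1) → Fin (n + 1),
      ddcrpProb d f α c = ∏ i : Fin (n + 1), (if c i = i then p else q) := by
    intro c
    unfold ddcrpProb ddcrpProbOn ddcrpWeight
    refine Finset.prod_congr rfl (fun i _ => ?_)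
    have hsum : ∑ j ∈ Finset.univ.erase i, f (d i j) = (n : ℝ) * f 0 := by
      rw [Finset.sum_congr rfl (fun j _ => by rw [hd])]
      rw [Finset.sum_const, Finset.card_erase_of_mem (Finset.mem_univ i),
        Finset.card_univ, Fintype.card_fin]
      simp [nsmul_eq_mul]
    rw [hsum]
    split_ifs with h
    · rw [hp]
    · rw [hd, hq]
  -- castSucc is never last
  have hcs : ∀ k : Fin n, (Fin.castSucc k) ≠ Fin.last n :=
    fun k => (Fin.castSucc_lt_last k).ne
  -- membership characterization
  have mem_iff : ∀ c : Fin (n + 1) → Fin (n + 1),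
      c ∈ E ↔ ∃ x, goodParam n x = c := by
    intro c
    simp only [hE, Set.mem_setOf_eq]
    constructor
    · intro h
      have step1 : ∀ i : Fin (n + 1), i ≠ Fin.last n → c i = i ∨ c i = Fin.last n := by
        intro i hi
        by_contra hcon
        push_neg at hcon
        obtain ⟨h1, h2⟩ := hcon
        exact h i (c i) hi h2 (fun he => h1 he.symm) (sameTable_step c i)
      by_cases hex : ∃ i₀ : Fin (n + 1), i₀ ≠ Fin.last n ∧ c i₀ = Fin.last n
      · obtain ⟨i₀, hi₀, hci₀⟩ := hex
        obtain ⟨k, hk⟩ := Fin.exists_castSucc_eq.2 hi₀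
        -- all other non-last customers self-link
        have huniq : ∀ j : Fin (n + 1), j ≠ Fin.last n → j ≠ i₀ → c j = j := by
          intro j hj hji
          rcases step1 j hj with h' | h'
          · exact h'
          · exfalso
            apply h i₀ j hi₀ hj (fun he => hji he.symm)
            have h₁ : sameTable c i₀ (Fin.last n) := hci₀ ▸ sameTable_step c i₀
            have h₂ : sameTable c j (Fin.last n) := h' ▸ sameTable_step c j
            exact Relation.EqvGen.trans _ _ _ h₁ (Relation.EqvGen.symm _ _ h₂)
        -- the last customer links to itself or back to i₀
        have hlast : c (Fin.last n) = Fin.last n ∨ c (Fin.last n) = i₀ := by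
          by_contra hcon
          push_neg at hcon
          obtain ⟨h1, h2⟩ := hcon
          apply h i₀ (c (Fin.last n)) hi₀ h1 (fun he => h2 he.symm)
          have h₁ : sameTable c i₀ (Fin.last n) := hci₀ ▸ sameTable_step c i₀
          exact Relation.EqvGen.trans _ _ _ h₁ (sameTable_step c (Fin.last n))
        rcases hlast with h' | h'
        · refine ⟨.inr (k, false), funext fun v => ?_⟩
          show (if v = Fin.last n then (if false then k.castSucc else Fin.last n)
            else if v = k.castSucc then Fin.last n else v) = c v
          rw [if_neg (by simp : ¬ (false = true))]
          by_cases h1 : v = Fin.last n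
          · rw [if_pos h1, h1, h']
          · rw [if_neg h1]
            by_cases h2 : v = k.castSucc
            · rw [if_pos h2, h2, hk, hci₀]
            · rw [if_neg h2, huniq v h1 (by rw [← hk]; exact h2)]
        · refine ⟨.inr (k, true), funext fun v => ?_⟩
          show (if v = Fin.last n then (if true then k.castSucc else Fin.last n)
            else if v = k.castSucc then Fin.last n else v) = c v
          rw [if_pos (rfl : (true : Bool) = true)]
          by_cases h1 : v = Fin.last n
          · rw [if_pos h1, h1, h', hk]
          · rw [if_neg h1]
            by_cases h2 : v = k.castSucc
            · rw [if_pos h2, h2, hk, hci₀]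
            · rw [if_neg h2, huniq v h1 (by rw [← hk]; exact h2)]
      · push_neg at hex
        refine ⟨.inl (c (Fin.last n)), funext fun v => ?_⟩
        show (if v = Fin.last n then c (Fin.last n) else v) = c v
        by_cases h1 : v = Fin.last n
        · rw [if_pos h1, h1]
        · rw [if_neg h1]
          rcases step1 v h1 with h' | h'
          · exact h'.symm
          · exact absurd h' (hex v h1)
    · rintro ⟨x, rfl⟩
      match x with
      | .inl t =>
        intro i j hi hj hij hst
        have hst' : sameTable (cA n t) i j := hst
        have hg : ∀ a, cA n t (cA n t a) = cA n t a := by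
          intro a
          by_cases ha : a = Fin.last n
          · subst ha
            simp only [cA, if_pos rfl]
            by_cases ht : t = Fin.last n <;> simp [ht]
          · simp [cA, ha]
        have hgg := sameTable_eq_of_invariant (cA n t) _ hg hst'
        simp only [cA, if_neg hi, if_neg hj] at hgg
        exact hij hgg
      | .inr (k, b) =>
        intro i j hi hj hij hst
        have hst' : sameTable (cB n k b) i j := hst
        have hg : ∀ a, (fun v => if v = Fin.last n then k.castSucc else v)
            ((cB n k b) a) = (fun v => if v = Fin.last n then k.castSucc else v) a := by
          intro a
          by_cases ha : a = Fin.last n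
          · subst ha
            cases b <;> simp [cB, hcs k]
          · by_cases hak : a = k.castSucc
            · subst hak
              simp [cB, hcs k, ha]
            · simp [cB, ha, hak]
        have hgg := sameTable_eq_of_invariant (cB n k b)
          (fun v => if v = Fin.last n then k.castSucc else v) hg hst'
        simp only [if_neg hi, if_neg hj] at hgg
        exact hij hgg
  -- injectivity of the parametrization
  have hinj : ∀ x ∈ (Finset.univ : Finset (Fin (n + 1) ⊕ Fin n × Bool)),
      ∀ y ∈ Finset.univ, goodParam n x = goodParam n y → x = y := by
    intro x _ y _ hxy
    match x, y with
    | .inl t, .inl t' =>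
      have h := congrFun hxy (Fin.last n)
      simp only [goodParam, Sum.elim_inl, cA, if_pos rfl, if_true,
        eq_self_iff_true, ite_true] at h
      rw [h]
    | .inl t, .inr (k, b) =>
      exfalso
      have h := congrFun hxy k.castSucc
      simp only [goodParam, Sum.elim_inl, Sum.elim_inr, cA, cB,
        if_neg (hcs k), if_pos rfl, eq_self_iff_true, ite_true] at h
      exact hcs k h
    | .inr (k, b), .inl t =>
      exfalso
      have h := congrFun hxy k.castSucc
      simp only [goodParam, Sum.elim_inl, Sum.elim_inr, cA, cB,
        if_neg (hcs k), if_pos rfl, eq_self_iff_true, ite_true] at h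
      exact hcs k h.symm
    | .inr (k, b), .inr (k', b') =>
      have hk : k = k' := by
        by_contra hne
        have h := congrFun hxy k.castSucc
        have hne' : k.castSucc ≠ k'.castSucc := by
          simpa [Fin.castSucc_inj] using hne
        simp only [goodParam, Sum.elim_inr, cB, if_neg (hcs k), if_pos rfl,
          if_neg hne', eq_self_iff_true, ite_true] at h
        exact hcs k h.symm
      subst hk
      have hb : b = b' := by
        have h := congrFun hxy (Fin.last n)
        simp only [goodParam, Sum.elim_inr, cB, if_pos rfl] at h
        cases b <;> cases b' <;> simp_all [hcs k, (hcs k).symm]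
      rw [hb]
  -- rewrite the indicator sum as a sum over the parametrization
  have hfilter : (Finset.univ.filter (fun c => c ∈ E) :
      Finset (Fin (n + 1) → Fin (n + 1))) = Finset.univ.image (goodParam n) := by
    ext c
    simp only [Finset.mem_filter, Finset.mem_univ, true_and, Finset.mem_image]
    rw [mem_iff c]
  have hsum1 : (∑ c : Fin (n + 1) → Fin (n + 1),
      Set.indicator E (ddcrpProb d f α) c)
      = ∑ x : Fin (n + 1) ⊕ Fin n × Bool, ddcrpProb d f α (goodParam n x) := by
    rw [Finset.sum_congr rfl
      (fun c _ => Set.indicator_apply E (ddcrpProb d f α) c)]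
    rw [← Finset.sum_filter, hfilter, Finset.sum_image hinj]
  rw [hsum1, Fintype.sum_sum_type]
  -- the `A` family
  have hA : ∀ t : Fin (n + 1), ddcrpProb d f α (cA n t)
      = p ^ n * (if t = Fin.last n then p else q) := by
    intro t
    rw [prob_eq, Fin.prod_univ_castSucc]
    have h1 : (∏ k : Fin n, (if cA n t k.castSucc = k.castSucc then p else q))
        = p ^ n := by
      rw [Finset.prod_congr rfl
        (fun k _ => if_pos (by simp [cA, hcs k] : cA n t k.castSucc = k.castSucc)),
        Finset.prod_const, Finset.card_univ, Fintype.card_fin]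
    rw [h1]
    congr 1
    have h2 : cA n t (Fin.last n) = t := by simp [cA]
    rw [h2]
  have hsumA : (∑ t : Fin (n + 1), ddcrpProb d f α (goodParam n (Sum.inl t)))
      = p ^ n * (p + (n : ℝ) * q) := by
    simp only [goodParam, Sum.elim_inl]
    rw [Finset.sum_congr rfl (fun t _ => hA t), ← Finset.mul_sum]
    congr 1
    rw [← Finset.add_sum_erase _ _ (Finset.mem_univ (Fin.last n)), if_pos rfl]
    congr 1
    rw [Finset.sum_congr rfl (fun t ht => if_neg (Finset.ne_of_mem_erase ht)),
      Finset.sum_const, Finset.card_erase_of_mem (Finset.mem_univ _),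
      Finset.card_univ, Fintype.card_fin]
    simp [nsmul_eq_mul]
  -- the `B` family
  have hB : ∀ (k : Fin n) (b : Bool), ddcrpProb d f α (cB n k b)
      = (if b then q else p) * (q * p ^ (n - 1)) := by
    intro k b
    rw [prob_eq]
    have hmem1 : Fin.last n ∈ (Finset.univ : Finset (Fin (n + 1))) :=
      Finset.mem_univ _
    rw [← Finset.mul_prod_erase _ _ hmem1]
    have hmem2 : k.castSucc ∈ Finset.univ.erase (Fin.last n) :=
      Finset.mem_erase.2 ⟨hcs k, Finset.mem_univ _⟩
    rw [← Finset.mul_prod_erase _ _ hmem2]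
    have hrest : (∏ v ∈ (Finset.univ.erase (Fin.last n)).erase k.castSucc,
        (if cB n k b v = v then p else q)) = p ^ (n - 1) := by
      have hself : ∀ v ∈ (Finset.univ.erase (Fin.last n)).erase k.castSucc,
          (if cB n k b v = v then p else q) = p := by
        intro v hv
        have hv1 : v ≠ k.castSucc := Finset.ne_of_mem_erase hv
        have hv2 : v ≠ Fin.last n :=
          Finset.ne_of_mem_erase (Finset.mem_of_mem_erase hv)
        rw [if_pos]
        show (if v = Fin.last n then _ else if v = k.castSucc then _ else v) = v
        rw [if_neg hv2, if_neg hv1]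
      rw [Finset.prod_congr rfl hself, Finset.prod_const,
        Finset.card_erase_of_mem hmem2, Finset.card_erase_of_mem hmem1,
        Finset.card_univ, Fintype.card_fin]
      congr 1
    rw [hrest]
    have hfac2 : (if cB n k b k.castSucc = k.castSucc then p else q) = q := by
      rw [if_neg]
      show ¬ (if k.castSucc = Fin.last n then _ else
        if k.castSucc = k.castSucc then Fin.last n else _) = k.castSucc
      rw [if_neg (hcs k), if_pos rfl]
      exact (hcs k).symm
    rw [hfac2]
    congr 1
    show (if cB n k b (Fin.last n) = Fin.last n then p else q) = _
    cases b <;> simp [cB, hcs k]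
  have hBb : ∀ k : Fin n, (∑ b : Bool, ddcrpProb d f α (cB n k b))
      = (p + q) * (q * p ^ (n - 1)) := by
    intro k
    rw [Fintype.sum_bool, hB k true, hB k false]
    norm_num
    ring
  have hsumB : (∑ x : Fin n × Bool, ddcrpProb d f α (goodParam n (Sum.inr x)))
      = (n : ℝ) * ((p + q) * (q * p ^ (n - 1))) := by
    simp only [goodParam, Sum.elim_inr]
    rw [Fintype.sum_prod_type]
    rw [Finset.sum_congr rfl (fun k _ => hBb k), Finset.sum_const,
      Finset.card_univ, Fintype.card_fin, nsmul_eq_mul]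
  rw [hsumA, hsumB]
  have hpq : p + (n : ℝ) * q = 1 := by
    rw [hp, hq]
    field_simp
  rw [hpq, mul_one]
  ring
end
end

section
/- Let α > 0 and set y = α/√2, p₃ = α/(α+2y), p₄ = α/(α+3y), q₄ = y/(α+3y). Then p₄³ + 3·p₄²·q₄·(p₄ + q₄) ≠ p₃³. (This rules out the root f(0) = α/√2 of the n = 2 equation: with all pairwise distances zero, the n = 3 marginal-invariance equation fails when f(0) = α/√2.) -/
/-- for `α > 0`, `y = α/√2`, `p₃ = α/(α+2y)`, `p₄ = α/(α+3y)`,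
`q₄ = y/(α+3y)`, we have `p₄³ + 3 p₄² q₄ (p₄+q₄) ≠ p₃³`. -/
theorem stmt13 (α y p₃ p₄ q₄ : ℝ) (hα : 0 < α) (hy : y = α / Real.sqrt 2)
    (hp₃ : p₃ = α / (α + 2 * y)) (hp₄ : p₄ = α / (α + 3 * y))
    (hq₄ : q₄ = y / (α + 3 * y)) :
    p₄ ^ 3 + 3 * p₄ ^ 2 * q₄ * (p₄ + q₄) ≠ p₃ ^ 3 := by
  have hs2 : (Real.sqrt 2) ^ 2 = 2 := Real.sq_sqrt (by norm_num)
  have hs1 : 1 < Real.sqrt 2 := by nlinarith [Real.sqrt_nonneg 2]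
  have hsp : 0 < Real.sqrt 2 := by linarith
  set s := Real.sqrt 2 with hsdef
  have hypos : 0 < y := by rw [hy]; positivity
  have hd3 : α + 2 * y > 0 := by linarith
  have hd4 : α + 3 * y > 0 := by linarith
  have hys : α = y * s := by rw [hy]; field_simp
  intro h
  rw [hp₃, hp₄, hq₄, hys] at h
  field_simp at h
  have key : y ^ 10 * (12 - 38 * s) = 0 := by
    linear_combination y ^ 10 * (90 + 58*s) * h + y ^ 10 * ((1074)*s^0 + (850)*s^1 + (174)*s^2) * hs2
  have hy10 : (0:ℝ) < y ^ 10 := pow_pos hypos 10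
  have : 12 - 38 * s = 0 := by
    rcases mul_eq_zero.mp key with h' | h'
    · linarith
    · exact h'
  linarith
end

section
/- Fix N ≥ 1 customers with sequential distances such that d(i,j) < ∞ for all j < i, and a decay function f with f(x) = 1 for all finite x and f(∞) = 0, and let α > 0. Then for every partition π of {1,…,N}, the probability under the ddCRP with decay f and parameter α that the induced table partition z(c) equals π is α^{|π|} · ∏_{B ∈ π} (|B|−1)! / ∏_{i=0}^{N−1} (α + i). In other words, this ddCRP recovers the traditional Chinese restaurant process with concentration parameter α. -/
open scoped BigOperators ENNReal Classical

noncomputable section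

namespace Stmt14Aux

variable {N : ℕ} {c : Fin N → Fin N}

/-- the eventual fixed point of iterating `c` -/
def croot (c : Fin N → Fin N) (i : Fin N) : Fin N := c^[N] i

lemma iterate_fixed_of_le (hc : ∀ i, c i ≤ i) :
    ∀ m (i : Fin N), i.val < m → c (c^[m] i) = c^[m] i := by
  intro m
  induction m with
  | zero => intro i h; omega
  | succ m ih =>
    intro i h
    by_cases hfix : c i = i
    · rw [Function.iterate_fixed hfix (m+1), hfix]
    · have hlt : (c i).val < i.val := lt_of_le_of_ne (hc i) (fun he => hfix (Fin.val_injective he))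
      rw [Function.iterate_succ_apply]
      exact ih (c i) (by omega)

lemma croot_fixed (hc : ∀ i, c i ≤ i) (i : Fin N) : c (croot c i) = croot c i :=
  iterate_fixed_of_le hc N i i.isLt

lemma croot_apply (hc : ∀ i, c i ≤ i) (i : Fin N) : croot c (c i) = croot c i := by
  have h1 : croot c (c i) = c^[N+1] i := (Function.iterate_succ_apply c N i).symm
  rw [h1, Function.iterate_succ_apply']
  exact croot_fixed hc i

lemma iterate_le (hc : ∀ i, c i ≤ i) (m : ℕ) (i : Fin N) : c^[m] i ≤ i := by
  induction m with
  | zero => simp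
  | succ m ih =>
    rw [Function.iterate_succ_apply']
    exact le_trans (hc _) ih

lemma croot_le (hc : ∀ i, c i ≤ i) (i : Fin N) : croot c i ≤ i := iterate_le hc N i

lemma croot_of_fixed {i : Fin N} (h : c i = i) : croot c i = i := Function.iterate_fixed h N

lemma croot_eq_self_iff (hc : ∀ i, c i ≤ i) (i : Fin N) : croot c i = i ↔ c i = i := by
  constructor
  · intro h
    by_contra hne
    have hlt : c i < i := lt_of_le_of_ne (hc i) hne
    have h2 : croot c (c i) ≤ c i := croot_le hc (c i)
    rw [croot_apply hc i, h] at h2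
    exact absurd (lt_of_le_of_lt h2 hlt) (lt_irrefl i)
  · exact croot_of_fixed

lemma sameTable_iterate (m : ℕ) (i : Fin N) : sameTable c i (c^[m] i) := by
  induction m with
  | zero => exact Relation.EqvGen.refl i
  | succ m ih =>
    rw [Function.iterate_succ_apply']
    exact Relation.EqvGen.trans _ _ _ ih (Relation.EqvGen.rel _ _ rfl)

lemma sameTable_iff_croot (hc : ∀ i, c i ≤ i) (i j : Fin N) :
    sameTable c i j ↔ croot c i = croot c j := by
  constructor
  · intro h
    induction h with
    | rel a b hab => rw [hab, croot_apply hc]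
    | refl => rfl
    | symm a b _ ih => exact ih.symm
    | trans a b e _ _ ih1 ih2 => exact ih1.trans ih2
  · intro h
    have h1 : sameTable c i (croot c i) := sameTable_iterate N i
    have h2 : sameTable c j (croot c j) := sameTable_iterate N j
    rw [← h] at h2
    exact Relation.EqvGen.trans _ _ _ h1 (Relation.EqvGen.symm _ _ h2)

lemma fin_prod_shift (m : ℕ) : ∏ j : Fin m, ((j.val : ℝ) + 1) = (m.factorial : ℝ) := by
  rw [Fin.prod_univ_eq_prod_range (fun j => ((j : ℝ) + 1)) m,
    ← Finset.prod_range_add_one_eq_factorial m]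
  push_cast
  rfl

lemma block_prod {N : ℕ} (α : ℝ) (C : Finset (Fin N)) (hC : C.Nonempty) :
    (∏ i ∈ C, (if i = C.min' hC then α else ((C.filter (fun j => j < i)).card : ℝ)))
      = α * ((C.card - 1).factorial : ℝ) := by
  have h1 : 0 < C.card := Finset.card_pos.mpr hC
  set F : Fin N → ℝ := fun i => if i = C.min' hC then α else ((C.filter (fun j => j < i)).card : ℝ) with hF
  have step1 : (∏ i ∈ C, F i) = ∏ k : Fin C.card, F ((C.orderIsoOfFin rfl k : Fin N)) := by
    rw [← Finset.prod_coe_sort C F, ← Equiv.prod_comp (C.orderIsoOfFin rfl).toEquiv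
      (fun x : {x // x ∈ C} => F ↑x)]
    rfl
  have hmin : ∀ k : Fin C.card, ((C.orderIsoOfFin rfl k : Fin N) = C.min' hC) ↔ k.val = 0 := by
    intro k
    constructor
    · intro h
      have h0 : (C.orderIsoOfFin rfl ⟨0, h1⟩ : Fin N) = C.min' hC := by
        rw [Finset.coe_orderIsoOfFin_apply, Finset.orderEmbOfFin_zero rfl h1]
      have h2 : C.orderIsoOfFin rfl k = C.orderIsoOfFin rfl ⟨0, h1⟩ :=
        Subtype.coe_injective (h.trans h0.symm)
      have := (C.orderIsoOfFin rfl).injective h2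
      simpa [Fin.ext_iff] using this
    · intro h
      have hk : k = ⟨0, h1⟩ := Fin.ext h
      rw [hk, Finset.coe_orderIsoOfFin_apply, Finset.orderEmbOfFin_zero rfl h1]
  have hcard : ∀ k : Fin C.card,
      (C.filter (fun j => j < (C.orderIsoOfFin rfl k : Fin N))).card = k.val := by
    intro k
    have himg : C.filter (fun j => j < (C.orderIsoOfFin rfl k : Fin N))
        = Finset.image (fun m : Fin C.card => (C.orderIsoOfFin rfl m : Fin N))
            (Finset.univ.filter (fun m => m < k)) := by
      ext j
      simp only [Finset.mem_filter, Finset.mem_image, Finset.mem_univ, true_and]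
      constructor
      · rintro ⟨hjC, hjlt⟩
        refine ⟨(C.orderIsoOfFin rfl).symm ⟨j, hjC⟩, ?_, by simp⟩
        rw [← OrderIso.lt_iff_lt (C.orderIsoOfFin rfl)]
        simpa only [OrderIso.apply_symm_apply] using (Subtype.coe_lt_coe (x := ⟨j, hjC⟩)).mp hjlt
      · rintro ⟨m, hmk, rfl⟩
        refine ⟨(C.orderIsoOfFin rfl m).2, ?_⟩
        exact Subtype.coe_lt_coe.mpr ((OrderIso.lt_iff_lt _).mpr hmk)
    rw [himg, Finset.card_image_of_injective _
      (fun a b hab => (C.orderIsoOfFin rfl).injective (Subtype.coe_injective hab))]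
    have h3 : Finset.univ.filter (fun m : Fin C.card => m < k) = Finset.Iio k := by
      ext; simp
    rw [h3]
    simp
  rw [step1]
  have step2 : ∀ k : Fin C.card, F ((C.orderIsoOfFin rfl k : Fin N))
      = if k.val = 0 then α else (k.val : ℝ) := by
    intro k
    rw [hF]
    simp only []
    by_cases h0 : k.val = 0
    · rw [if_pos ((hmin k).mpr h0), if_pos h0]
    · rw [if_neg (fun h => h0 ((hmin k).mp h)), if_neg h0, hcard k]
  rw [Finset.prod_congr rfl (fun k _ => step2 k)]
  obtain ⟨m, hm⟩ : ∃ m, C.card = m + 1 := Nat.exists_eq_succ_of_ne_zero h1.ne'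
  rw [hm]
  rw [Fin.prod_univ_succ]
  simp only [Fin.val_zero, if_pos rfl, Fin.val_succ, Nat.succ_ne_zero, if_false]
  rw [show m + 1 - 1 = m from rfl]
  congr 1
  have := fin_prod_shift m
  simpa using this

/-- the local weight function incorporating the partition constraint -/
def hfun {N : ℕ} (blk : Fin N → Finset (Fin N)) (mn : Fin N → Fin N) (α : ℝ)
    (i j : Fin N) : ℝ :=
  if i = mn i then (if j = i then α else 0) else (if j ∈ blk i ∧ j < i then 1 else 0)

end Stmt14Aux

open Stmt14Aux

/-- with sequential distances that are finite below the diagonal and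
decay `f = 1` on finite values (`f ⊤ = 0`), the ddCRP is the traditional Chinese
restaurant process: for every partition `π` of `{1, …, N}`, the probability that
the induced table partition equals `π` is
`α^{|π|} · ∏_{B ∈ π} (|B|-1)! / ∏_{i=0}^{N-1} (α + i)`. -/
theorem stmt14 {N : ℕ} (hN : 1 ≤ N) (d : Fin N → Fin N → ℝ≥0∞)
    (hseq : ∀ i j : Fin N, i < j → d i j = ⊤)
    (hfin : ∀ i j : Fin N, j < i → d i j ≠ ⊤)
    (f : ℝ≥0∞ → ℝ) (hf1 : ∀ x : ℝ≥0∞, x ≠ ⊤ → f x = 1) (hf_top : f ⊤ = 0)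
    (α : ℝ) (hα : 0 < α)
    (π : Finset (Finset (Fin N)))
    (hπne : ∀ C ∈ π, C.Nonempty)
    (hπpart : ∀ i : Fin N, ∃! C, C ∈ π ∧ i ∈ C) :
    (∑ c : Fin N → Fin N,
        Set.indicator
          {c | tablePartition c = {S : Set (Fin N) | ∃ C ∈ π, S = (C : Set (Fin N))}}
          (ddcrpProb d f α) c)
      = α ^ π.card * (∏ C ∈ π, ((C.card - 1).factorial : ℝ)) /
          ∏ i ∈ Finset.range N, (α + (i : ℝ)) := by
  classical
  set W : Set (Set (Fin N)) := {S : Set (Fin N) | ∃ C ∈ π, S = (C : Set (Fin N))} with hWdef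
  set Scond : Set (Fin N → Fin N) := {c | tablePartition c = W} with hSdef
  choose block hblock using hπpart
  have hbπ : ∀ i, block i ∈ π := fun i => (hblock i).1.1
  have hbmem : ∀ i, i ∈ block i := fun i => (hblock i).1.2
  have huniq : ∀ (i : Fin N) (C : Finset (Fin N)), C ∈ π → i ∈ C → C = block i :=
    fun i C h1 h2 => (hblock i).2 C ⟨h1, h2⟩
  have hbne : ∀ i, (block i).Nonempty := fun i => ⟨i, hbmem i⟩
  set mino : Fin N → Fin N := fun i => (block i).min' (hbne i) with hminodef
  have hmin'_congr : ∀ (s t : Finset (Fin N)) (hs : s.Nonempty) (ht : t.Nonempty),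
      s = t → s.min' hs = t.min' ht := by rintro s t hs ht rfl; rfl
  have hmino_mem : ∀ i, mino i ∈ block i := fun i => (block i).min'_mem _
  have hmino_eq : ∀ i j, block i = block j → mino i = mino j :=
    fun i j h => hmin'_congr _ _ _ _ h
  have hmino_block : ∀ i j, mino i = mino j → block i = block j := by
    intro i j h
    have h1 : block i = block (mino i) := huniq (mino i) (block i) (hbπ i) (hmino_mem i)
    have h2 : block j = block (mino j) := huniq (mino j) (block j) (hbπ j) (hmino_mem j)
    rw [h1, h2, h]
  -- denominators
  have hden : ∀ i : Fin N, (∑ j ∈ Finset.univ.erase i, f (d i j)) = (i.val : ℝ) := by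
    intro i
    have h1 : ∀ j ∈ Finset.univ.erase i, f (d i j) = if j < i then (1 : ℝ) else 0 := by
      intro j hj
      have hji : j ≠ i := Finset.ne_of_mem_erase hj
      rcases lt_or_gt_of_ne hji with h | h
      · rw [if_pos h, hf1 _ (hfin i j h)]
      · rw [if_neg (asymm h), hseq i j h, hf_top]
    rw [Finset.sum_congr rfl h1, Finset.sum_boole]
    have h2 : (Finset.univ.erase i).filter (fun j => j < i) = Finset.Iio i := by
      ext j
      simp only [Finset.mem_filter, Finset.mem_erase, Finset.mem_univ, Finset.mem_Iio, true_and,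
        and_true]
      constructor
      · rintro ⟨_, h⟩; exact h
      · intro h; exact ⟨ne_of_lt h, h⟩
    rw [h2]
    simp
  set D : ℝ := ∏ i ∈ Finset.range N, (α + (i : ℝ)) with hD
  have hprob : ∀ c, ddcrpProb d f α c = (∏ i, ddcrpWeight d f α i (c i)) / D := by
    intro c
    unfold ddcrpProb ddcrpProbOn
    rw [Finset.prod_div_distrib]
    congr 1
    rw [hD, ← Fin.prod_univ_eq_prod_range (fun i => α + (i : ℝ)) N]
    exact Finset.prod_congr rfl (fun i _ => by rw [hden i])
  -- the key pointwise characterization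
  have hB : ∀ c : Fin N → Fin N, (∀ i, c i ≤ i) →
      ((tablePartition c = W) ↔ ∀ i, c i ∈ block i ∧ (c i = i ↔ i = mino i)) := by
    intro c hc
    constructor
    · intro htp i
      have hmemW : {j | sameTable c i j} ∈ W := by
        rw [← htp]; exact ⟨i, rfl⟩
      obtain ⟨C, hCπ, hCeq⟩ := hmemW
      have hiC : i ∈ C := by
        have h0 : i ∈ {j | sameTable c i j} := Relation.EqvGen.refl i
        rw [hCeq] at h0; exact_mod_cast h0
      have hCb : C = block i := huniq i C hCπ hiC
      have hset : {j | sameTable c i j} = ((block i : Finset (Fin N)) : Set (Fin N)) := by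
        rw [hCeq, hCb]
      have hci_mem : c i ∈ block i := by
        have h0 : c i ∈ {j | sameTable c i j} := Relation.EqvGen.rel i (c i) rfl
        rw [hset] at h0; exact_mod_cast h0
      have hroot_mem : croot c i ∈ block i := by
        have h0 : sameTable c i (croot c i) :=
          (sameTable_iff_croot hc i _).mpr (croot_of_fixed (croot_fixed hc i)).symm
        have h1 : croot c i ∈ {j | sameTable c i j} := h0
        rw [hset] at h1; exact_mod_cast h1
      have hroot_le_all : ∀ j ∈ block i, croot c i ≤ j := by
        intro j hj
        have hst : sameTable c i j := by
          have h1 : j ∈ {j | sameTable c i j} := by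
            rw [hset]; exact_mod_cast hj
          exact h1
        have h2 := (sameTable_iff_croot hc i j).mp hst
        calc croot c i = croot c j := h2
          _ ≤ j := croot_le hc j
      have hmino_root : mino i = croot c i :=
        le_antisymm ((block i).min'_le _ hroot_mem) (Finset.le_min' _ _ _ hroot_le_all)
      refine ⟨hci_mem, ?_⟩
      rw [← croot_eq_self_iff hc i, hmino_root]
      exact eq_comm
    · intro hp
      have hroot : ∀ i, croot c i = mino i := by
        have key : ∀ n, ∀ i : Fin N, i.val ≤ n → croot c i = mino i := by
          intro n
          induction n with
          | zero =>
            intro i hi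
            have hfix : c i = i := by
              have h0 : (c i).val ≤ i.val := hc i
              exact Fin.ext (by omega)
            rw [croot_of_fixed hfix]
            exact (hp i).2.mp hfix
          | succ n ih =>
            intro i hi
            by_cases hfix : c i = i
            · rw [croot_of_fixed hfix]; exact (hp i).2.mp hfix
            · have hlt : (c i).val < i.val :=
                lt_of_le_of_ne (hc i) (fun he => hfix (Fin.val_injective he))
              have h1 : croot c i = croot c (c i) := (croot_apply hc i).symm
              have h2 : croot c (c i) = mino (c i) := ih (c i) (by omega)
              have h3 : block (c i) = block i :=
                (huniq (c i) (block i) (hbπ i) (hp i).1).symm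
              rw [h1, h2]
              exact hmino_eq _ _ h3
        exact fun i => key i.val i le_rfl
      have hfiber : ∀ i, {j | sameTable c i j} = ((block i : Finset (Fin N)) : Set (Fin N)) := by
        intro i
        ext j
        simp only [Set.mem_setOf_eq, Finset.mem_coe]
        rw [sameTable_iff_croot hc, hroot i, hroot j]
        constructor
        · intro hm
          have h0 := hmino_block i j hm
          rw [h0]; exact hbmem j
        · intro hj
          exact hmino_eq i j (huniq j (block i) (hbπ i) hj)
      ext S
      constructor
      · rintro ⟨i, rfl⟩
        exact ⟨block i, hbπ i, hfiber i⟩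
      · rintro ⟨C, hCπ, rfl⟩
        obtain ⟨i, hiC⟩ := hπne C hCπ
        refine ⟨i, ?_⟩
        rw [hfiber i]
        exact Finset.coe_inj.mpr (huniq i C hCπ hiC)
  -- indicator * weights = hfun product
  have hmain : ∀ c : Fin N → Fin N,
      Set.indicator Scond (fun c => ∏ i, ddcrpWeight d f α i (c i)) c
        = ∏ i, hfun block mino α i (c i) := by
    intro c
    by_cases hc : ∀ i, c i ≤ i
    · by_cases hS : c ∈ Scond
      · rw [Set.indicator_of_mem hS]
        refine Finset.prod_congr rfl (fun i _ => ?_)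
        obtain ⟨hin, hiff⟩ := (hB c hc).mp hS i
        by_cases him : i = mino i
        · have hci : c i = i := hiff.mpr him
          simp only [hfun, ddcrpWeight, if_pos him, if_pos hci]
        · have hci : c i ≠ i := fun hh => him (hiff.mp hh)
          have hlt : c i < i := lt_of_le_of_ne (hc i) hci
          simp only [hfun, ddcrpWeight, if_neg him, if_neg hci,
            if_pos (show c i ∈ block i ∧ c i < i from ⟨hin, hlt⟩)]
          exact hf1 _ (hfin i (c i) hlt)
      · rw [Set.indicator_of_notMem hS]
        symm
        have hnall : ¬ ∀ i, c i ∈ block i ∧ (c i = i ↔ i = mino i) :=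
          fun hcontra => hS (show c ∈ Scond from (hB c hc).mpr hcontra)
        obtain ⟨i, hi⟩ := not_forall.mp hnall
        apply Finset.prod_eq_zero (Finset.mem_univ i)
        by_cases him : i = mino i
        · have hci : c i ≠ i := by
            intro hcieq
            exact hi ⟨by rw [hcieq]; exact hbmem i, ⟨fun _ => him, fun _ => hcieq⟩⟩
          simp only [hfun, if_pos him, if_neg hci]
        · have hni : ¬(c i ∈ block i ∧ c i < i) := by
            rintro ⟨h1, h2⟩
            exact hi ⟨h1, ⟨fun hh => absurd hh (ne_of_lt h2), fun hh => absurd hh him⟩⟩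
          simp only [hfun, if_neg him, if_neg hni]
    · push_neg at hc
      obtain ⟨i, hi⟩ := hc
      have hne : c i ≠ i := fun hh => by rw [hh] at hi; exact lt_irrefl i hi
      have hz1 : ddcrpWeight d f α i (c i) = 0 := by
        rw [ddcrpWeight, if_neg hne, hseq i (c i) hi, hf_top]
      have hz2 : hfun block mino α i (c i) = 0 := by
        by_cases him : i = mino i
        · simp only [hfun, if_pos him, if_neg hne]
        · have hni : ¬(c i ∈ block i ∧ c i < i) := fun hh => (lt_asymm hi) hh.2
          simp only [hfun, if_neg him, if_neg hni]
      rw [Set.indicator_apply]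
      split
      · exact (Finset.prod_eq_zero (Finset.mem_univ i) hz1).trans
          (Finset.prod_eq_zero (Finset.mem_univ i) hz2).symm
      · exact (Finset.prod_eq_zero (Finset.mem_univ i) hz2).symm
  have hswap : (∑ c : Fin N → Fin N, ∏ i, hfun block mino α i (c i))
      = ∏ i, ∑ j, hfun block mino α i j := by
    rw [Finset.prod_univ_sum, Fintype.piFinset_univ]
  have hsumj : ∀ i, (∑ j, hfun block mino α i j)
      = if i = mino i then α else (((block i).filter (fun j => j < i)).card : ℝ) := by
    intro i
    by_cases him : i = mino i
    · simp only [hfun, if_pos him]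
      simp
    · simp only [hfun, if_neg him]
      rw [Finset.sum_boole]
      congr 1
      congr 1
      ext j
      simp [Finset.mem_filter]
  -- partition split
  have hcover : (Finset.univ : Finset (Fin N)) = π.biUnion id := by
    ext i
    simp only [Finset.mem_univ, true_iff, Finset.mem_biUnion, id]
    exact ⟨block i, hbπ i, hbmem i⟩
  have hdisj : ∀ C1 ∈ π, ∀ C2 ∈ π, C1 ≠ C2 → Disjoint (id C1) (id C2) := by
    intro C1 h1 C2 h2 hne12
    rw [Finset.disjoint_left]
    intro a ha1 ha2
    exact hne12 ((huniq a C1 h1 ha1).trans (huniq a C2 h2 ha2).symm)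
  have hsplit : (∏ i, (if i = mino i then α else (((block i).filter (fun j => j < i)).card : ℝ)))
      = ∏ C ∈ π, (α * ((C.card - 1).factorial : ℝ)) := by
    rw [hcover, Finset.prod_biUnion hdisj]
    refine Finset.prod_congr rfl (fun C hC => ?_)
    rw [show (∏ i ∈ id C, (if i = mino i then α
          else (((block i).filter (fun j => j < i)).card : ℝ)))
        = ∏ i ∈ C, (if i = C.min' (hπne C hC) then α
          else ((C.filter (fun j => j < i)).card : ℝ)) from ?_]
    · exact block_prod α C (hπne C hC)
    · refine Finset.prod_congr rfl (fun i hi => ?_)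
      have hbC : block i = C := (huniq i C hC hi).symm
      have hmC : mino i = C.min' (hπne C hC) := hmin'_congr _ _ _ _ hbC
      rw [hbC, hmC]
  -- assemble
  calc (∑ c : Fin N → Fin N, Set.indicator Scond (ddcrpProb d f α) c)
      = ∑ c : Fin N → Fin N,
          (Set.indicator Scond (fun c => ∏ i, ddcrpWeight d f α i (c i)) c) / D := by
        refine Finset.sum_congr rfl (fun c _ => ?_)
        rw [Set.indicator_apply, Set.indicator_apply]
        split
        · exact hprob c
        · rw [zero_div]
    _ = (∑ c : Fin N → Fin N,
          Set.indicator Scond (fun c => ∏ i, ddcrpWeight d f α i (c i)) c) / D := by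
        rw [Finset.sum_div]
    _ = (∏ i, ∑ j, hfun block mino α i j) / D := by
        rw [Finset.sum_congr rfl (fun c _ => hmain c), hswap]
    _ = (∏ C ∈ π, (α * ((C.card - 1).factorial : ℝ))) / D := by
        rw [Finset.prod_congr rfl (fun i _ => hsumj i), hsplit]
    _ = α ^ π.card * (∏ C ∈ π, ((C.card - 1).factorial : ℝ)) / D := by
        rw [Finset.prod_mul_distrib, Finset.prod_const]
end
end

section
/- Let N ≥ 1, let c : {1,…,N} → {1,…,N}, fix i ∈ {1,…,N}, and let c' be the function equal to c except that c'(i) = i (removing customer i's link). Then every block of z(c) not containing i is also a block of z(c'), and the block T of z(c) containing i satisfies exactly one of: (1) T is a block of z(c') (the partition is unchanged, z(c') = z(c)); or (2) T is the disjoint union of exactly two blocks of z(c'), one of which contains i (the table splits in two). In particular z(c') refines z(c). -/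
namespace Stmt17Aux

variable {N : ℕ} {c c' : Fin N → Fin N} {i : Fin N}

lemma st_refl (c : Fin N → Fin N) (a : Fin N) : sameTable c a a := Relation.EqvGen.refl a

lemma st_symm {a b : Fin N} (h : sameTable c a b) : sameTable c b a :=
  Relation.EqvGen.symm _ _ h

lemma st_trans {a b d : Fin N} (h1 : sameTable c a b) (h2 : sameTable c b d) :
    sameTable c a d := Relation.EqvGen.trans _ _ _ h1 h2

lemma class_eq {a b : Fin N} (h : sameTable c a b) :
    {j | sameTable c a j} = {j | sameTable c b j} :=
  Set.ext fun j => ⟨fun hj => st_trans (st_symm h) hj, fun hj => st_trans h hj⟩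

/-- monotonicity: removing a link only shrinks the relation -/
lemma st_mono (hci : c' i = i) (hne : ∀ a : Fin N, a ≠ i → c' a = c a)
    {a b : Fin N} (h : sameTable c' a b) : sameTable c a b := by
  induction h with
  | rel a b hb =>
      by_cases hai : a = i
      · subst hai; rw [hci] at hb; cases hb; exact st_refl c a
      · exact Relation.EqvGen.rel _ _ (by rw [hb, hne a hai])
  | refl a => exact st_refl c a
  | symm a b _ ih => exact st_symm ih
  | trans a b d _ _ ih1 ih2 => exact st_trans ih1 ih2

/-- if the class of `a` under `c` does not contain `i`, the relation is unchanged -/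
lemma st_of_not (hci : c' i = i) (hne : ∀ a : Fin N, a ≠ i → c' a = c a)
    {a b : Fin N} (h : sameTable c a b) (hna : ¬ sameTable c i a) :
    sameTable c' a b := by
  induction h with
  | rel a b hb =>
      have hai : a ≠ i := fun h => hna (h ▸ st_refl c a)
      exact Relation.EqvGen.rel _ _ (by rw [hb, ← hne a hai])
  | refl a => exact st_refl c' a
  | symm a b h ih =>
      exact st_symm (ih fun hia => hna (st_trans hia h))
  | trans a b d hab hbd ih1 ih2 =>
      have hnb : ¬ sameTable c i b := fun hib => hna (st_trans hib (st_symm hab))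
      exact st_trans (ih1 hna) (ih2 hnb)

/-- the class of `i` under `c` is covered by the classes of `i` and `c i` under `c'` -/
lemma st_cover (hci : c' i = i) (hne : ∀ a : Fin N, a ≠ i → c' a = c a)
    {a b : Fin N} (h : sameTable c a b) :
    (sameTable c' i a ∨ sameTable c' (c i) a) ↔
    (sameTable c' i b ∨ sameTable c' (c i) b) := by
  induction h with
  | rel a b hb =>
      by_cases hai : a = i
      · subst hai
        constructor
        · intro _; subst hb; exact Or.inr (st_refl c' _)
        · intro _; exact Or.inl (st_refl c' _)
      · have hab : sameTable c' a b := Relation.EqvGen.rel _ _ (by rw [hb, ← hne a hai])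
        exact ⟨fun h => h.imp (fun h => st_trans h hab) (fun h => st_trans h hab),
               fun h => h.imp (fun h => st_trans h (st_symm hab))
                 (fun h => st_trans h (st_symm hab))⟩
  | refl a => exact Iff.rfl
  | symm a b _ ih => exact ih.symm
  | trans a b d _ _ ih1 ih2 => exact ih1.trans ih2

/-- if `i` and `c i` are still related, nothing changed -/
lemma st_all (hci : c' i = i) (hne : ∀ a : Fin N, a ≠ i → c' a = c a)
    (hic : sameTable c' i (c i)) {a b : Fin N} (h : sameTable c a b) :
    sameTable c' a b := by
  induction h with
  | rel a b hb =>
      by_cases hai : a = i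
      · subst hai; subst hb; exact hic
      · exact Relation.EqvGen.rel _ _ (by rw [hb, ← hne a hai])
  | refl a => exact st_refl c' a
  | symm a b _ ih => exact st_symm ih
  | trans a b d _ _ ih1 ih2 => exact st_trans ih1 ih2

end Stmt17Aux

open Stmt17Aux in
/-- removing customer `i`'s link (replacing `c` by `c'` with
`c' i = i`): every block of `z(c)` not containing `i` is a block of `z(c')`; the
block `T` of `z(c)` containing `i` satisfies exactly one of (1) `T ∈ z(c')` and the
partition is unchanged, or (2) `T` is the disjoint union of exactly two blocks of
`z(c')`, one containing `i`; and `z(c')` refines `z(c)`. -/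
theorem stmt17 {N : ℕ} (hN : 1 ≤ N) (c : Fin N → Fin N) (i : Fin N)
    (c' : Fin N → Fin N) (hc' : c' = Function.update c i i) :
    (∀ B ∈ tablePartition c, i ∉ B → B ∈ tablePartition c') ∧
    Xor'
      ({j | sameTable c i j} ∈ tablePartition c' ∧
        tablePartition c' = tablePartition c)
      (∃ B₁ ∈ tablePartition c', ∃ B₂ ∈ tablePartition c',
        B₁ ≠ B₂ ∧ i ∈ B₁ ∧ Disjoint B₁ B₂ ∧
        {j | sameTable c i j} = B₁ ∪ B₂) ∧
    (∀ B ∈ tablePartition c', ∃ C ∈ tablePartition c, B ⊆ C) := by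
  have hci : c' i = i := by rw [hc']; simp
  have hne : ∀ a : Fin N, a ≠ i → c' a = c a := by
    intro a ha; rw [hc']; exact Function.update_of_ne ha _ _
  refine ⟨?_, ?_, ?_⟩
  · -- blocks avoiding i are unchanged
    rintro B ⟨a, rfl⟩ hi
    refine ⟨a, Set.ext fun j => ⟨fun hj => ?_, fun hj => st_mono hci hne hj⟩⟩
    exact st_of_not hci hne hj (fun hia => hi (st_symm hia))
  · -- the Xor'
    by_cases hic : sameTable c' i (c i)
    · -- case 1: unchanged
      have hST : ∀ a b : Fin N, sameTable c' a b ↔ sameTable c a b :=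
        fun a b => ⟨st_mono hci hne, st_all hci hne hic⟩
      have hcls : ∀ a : Fin N, {j | sameTable c' a j} = {j | sameTable c a j} :=
        fun a => Set.ext fun j => hST a j
      have hTP : tablePartition c' = tablePartition c := by
        ext B
        exact ⟨fun ⟨a, hB⟩ => ⟨a, hB.trans (hcls a)⟩, fun ⟨a, hB⟩ => ⟨a, hB.trans (hcls a).symm⟩⟩
      refine Or.inl ⟨⟨⟨i, (hcls i).symm⟩, hTP⟩, ?_⟩
      rintro ⟨B₁, ⟨a₁, rfl⟩, B₂, ⟨a₂, rfl⟩, hneq, hiB₁, hdisj, hun⟩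
      have hB₁ : {j | sameTable c' a₁ j} = {j | sameTable c i j} := by
        rw [class_eq (hiB₁ : sameTable c' a₁ i), hcls i]
      have ha₂ : a₂ ∈ {j | sameTable c' a₂ j} := st_refl c' a₂
      have ha₂' : a₂ ∈ {j | sameTable c' a₁ j} := by
        rw [hB₁, hun]; exact Or.inr ha₂
      exact Set.disjoint_left.mp hdisj ha₂' ha₂
    · -- case 2: the table splits
      refine Or.inr ⟨⟨{j | sameTable c' i j}, ⟨i, rfl⟩,
        {j | sameTable c' (c i) j}, ⟨c i, rfl⟩, ?_, st_refl c' i, ?_, ?_⟩, ?_⟩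
      · intro h
        have hmem : c i ∈ {j | sameTable c' (c i) j} := st_refl c' (c i)
        rw [← h] at hmem
        exact hic hmem
      · rw [Set.disjoint_left]
        intro j hj1 hj2
        exact hic (st_trans hj1 (st_symm hj2))
      · ext j
        constructor
        · intro hj
          exact ((st_cover hci hne hj).mp (Or.inl (st_refl c' i)))
        · rintro (hj | hj)
          · exact st_mono hci hne hj
          · exact st_trans (Relation.EqvGen.rel _ _ rfl) (st_mono hci hne hj)
      · rintro ⟨⟨a, hT⟩, -⟩
        have hia : sameTable c' a i := by
          have : i ∈ {j | sameTable c i j} := st_refl c i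
          rwa [hT] at this
        have hci' : c i ∈ {j | sameTable c i j} := Relation.EqvGen.rel _ _ rfl
        rw [hT] at hci'
        exact hic (st_trans (st_symm hia) hci')
  · -- refinement
    rintro B ⟨a, rfl⟩
    exact ⟨{j | sameTable c a j}, ⟨a, rfl⟩, fun j hj => st_mono hci hne hj⟩
end

section
/- Let N ≥ 1, let c : {1,…,N} → {1,…,N} with c(i) = i for a fixed i ∈ {1,…,N}, let j ∈ {1,…,N}, and let c' be the function equal to c except that c'(i) = j (adding a link from customer i to customer j). If i and j lie in the same block of z(c) (in particular if j = i), then z(c') = z(c). Otherwise, z(c') is obtained from z(c) by merging the block containing i and the block containing j: z(c') = (z(c) \ {T_i, T_j}) ∪ {T_i ∪ T_j}, where T_i and T_j are the blocks of z(c) containing i and j respectively. -/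
namespace Stmt18Aux

open Relation

variable {N : ℕ}

lemma symmS {c : Fin N → Fin N} {a b : Fin N} (h : sameTable c a b) : sameTable c b a :=
  EqvGen.symm _ _ h

lemma transS {c : Fin N → Fin N} {a b d : Fin N} (h : sameTable c a b)
    (h2 : sameTable c b d) : sameTable c a d :=
  EqvGen.trans _ _ _ h h2

lemma reflS (c : Fin N → Fin N) (a : Fin N) : sameTable c a a := EqvGen.refl a

lemma class_eq {c : Fin N → Fin N} {a b : Fin N} (h : sameTable c a b) :
    {k | sameTable c a k} = {k | sameTable c b k} := by
  ext k
  exact ⟨fun hk => transS (symmS h) hk, fun hk => transS h hk⟩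

lemma same_mono {c : Fin N → Fin N} {i j : Fin N} (hci : c i = i) {a b : Fin N}
    (h : sameTable c a b) : sameTable (Function.update c i j) a b := by
  induction h with
  | rel a b hab =>
    by_cases ha : a = i
    · subst ha; rw [hab, hci]; exact EqvGen.refl a
    · exact EqvGen.rel _ _ (by rw [Function.update_of_ne ha]; exact hab)
  | refl a => exact EqvGen.refl a
  | symm a b _ ih => exact EqvGen.symm _ _ ih
  | trans a b d _ _ ih1 ih2 => exact EqvGen.trans _ _ _ ih1 ih2

lemma same_update {c : Fin N → Fin N} {i j : Fin N} (hci : c i = i) (a b : Fin N) :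
    sameTable (Function.update c i j) a b ↔
      sameTable c a b ∨ (sameTable c a i ∧ sameTable c j b) ∨
        (sameTable c a j ∧ sameTable c i b) := by
  constructor
  · intro h
    induction h with
    | rel a b hab =>
      by_cases ha : a = i
      · subst ha
        rw [Function.update_self] at hab
        exact Or.inr (Or.inl ⟨EqvGen.refl a, hab ▸ EqvGen.refl j⟩)
      · rw [Function.update_of_ne ha] at hab
        exact Or.inl (EqvGen.rel _ _ hab)
    | refl a => exact Or.inl (EqvGen.refl a)
    | symm a b _ ih =>
      rcases ih with h | ⟨h1, h2⟩ | ⟨h1, h2⟩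
      · exact Or.inl (symmS h)
      · exact Or.inr (Or.inr ⟨symmS h2, symmS h1⟩)
      · exact Or.inr (Or.inl ⟨symmS h2, symmS h1⟩)
    | trans a b d _ _ ih1 ih2 =>
      rcases ih1 with h | ⟨h1, h2⟩ | ⟨h1, h2⟩ <;>
        rcases ih2 with g | ⟨g1, g2⟩ | ⟨g1, g2⟩
      · exact Or.inl (transS h g)
      · exact Or.inr (Or.inl ⟨transS h g1, g2⟩)
      · exact Or.inr (Or.inr ⟨transS h g1, g2⟩)
      · exact Or.inr (Or.inl ⟨h1, transS h2 g⟩)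
      · exact Or.inr (Or.inl ⟨h1, g2⟩)
      · exact Or.inl (transS h1 g2)
      · exact Or.inr (Or.inr ⟨h1, transS h2 g⟩)
      · exact Or.inl (transS h1 g2)
      · exact Or.inr (Or.inr ⟨h1, g2⟩)
  · intro h
    have hij : sameTable (Function.update c i j) i j :=
      EqvGen.rel _ _ (by rw [Function.update_self])
    rcases h with h | ⟨h1, h2⟩ | ⟨h1, h2⟩
    · exact same_mono hci h
    · exact transS (transS (same_mono hci h1) hij) (same_mono hci h2)
    · exact transS (transS (same_mono hci h1) (symmS hij)) (same_mono hci h2)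

end Stmt18Aux

open Stmt18Aux in
/-- adding a link from customer `i` (with `c i = i`) to customer `j`
(replacing `c` by `c' = update c i j`): if `i` and `j` are in the same block of
`z(c)` (in particular if `j = i`) then `z(c') = z(c)`; otherwise `z(c')` is
obtained from `z(c)` by merging the blocks containing `i` and `j`. -/
theorem stmt18 {N : ℕ} (hN : 1 ≤ N) (c : Fin N → Fin N) (i j : Fin N)
    (hci : c i = i) (c' : Fin N → Fin N) (hc' : c' = Function.update c i j) :
    (sameTable c i j → tablePartition c' = tablePartition c) ∧
    (¬ sameTable c i j →
      tablePartition c' =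
        (tablePartition c \
            {({k | sameTable c i k} : Set (Fin N)), {k | sameTable c j k}}) ∪
          {({k | sameTable c i k} : Set (Fin N)) ∪ {k | sameTable c j k}}) := by
  subst hc'
  constructor
  · -- same block case
    intro hij
    have key : ∀ a b, sameTable (Function.update c i j) a b ↔ sameTable c a b := by
      intro a b
      rw [same_update hci]
      constructor
      · rintro (h | ⟨h1, h2⟩ | ⟨h1, h2⟩)
        · exact h
        · exact transS (transS h1 hij) h2
        · exact transS (transS h1 (symmS hij)) h2
      · exact Or.inl
    unfold tablePartition
    ext B
    simp only [Set.mem_setOf_eq]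
    constructor <;> rintro ⟨a, rfl⟩ <;> exact ⟨a, by ext k; simp [Set.mem_setOf_eq, key]⟩
  · -- different blocks case
    intro hns
    have claimA : ∀ a, (sameTable c a i ∨ sameTable c a j) →
        {k | sameTable (Function.update c i j) a k} =
          ({k | sameTable c i k} : Set (Fin N)) ∪ {k | sameTable c j k} := by
      intro a ha
      ext k
      simp only [Set.mem_setOf_eq, Set.mem_union, same_update hci]
      rcases ha with ha | ha
      · constructor
        · rintro (h | ⟨h1, h2⟩ | ⟨h1, h2⟩)
          · exact Or.inl (transS (symmS ha) h)
          · exact Or.inr h2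
          · exact absurd (transS (symmS ha) h1) hns
        · rintro (h | h)
          · exact Or.inl (transS ha h)
          · exact Or.inr (Or.inl ⟨ha, h⟩)
      · constructor
        · rintro (h | ⟨h1, h2⟩ | ⟨h1, h2⟩)
          · exact Or.inr (transS (symmS ha) h)
          · exact absurd (symmS (transS (symmS ha) h1)) hns
          · exact Or.inl h2
        · rintro (h | h)
          · exact Or.inr (Or.inr ⟨ha, h⟩)
          · exact Or.inl (transS ha h)
    have claimB : ∀ a, ¬ sameTable c a i → ¬ sameTable c a j →
        {k | sameTable (Function.update c i j) a k} = {k | sameTable c a k} := by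
      intro a hai haj
      ext k
      simp only [Set.mem_setOf_eq, same_update hci]
      constructor
      · rintro (h | ⟨h1, h2⟩ | ⟨h1, h2⟩)
        · exact h
        · exact absurd h1 hai
        · exact absurd h1 haj
      · exact Or.inl
    ext B
    simp only [tablePartition, Set.mem_setOf_eq, Set.mem_union, Set.mem_diff,
      Set.mem_insert_iff, Set.mem_singleton_iff, not_or]
    constructor
    · rintro ⟨a, rfl⟩
      by_cases ha : sameTable c a i ∨ sameTable c a j
      · exact Or.inr (claimA a ha)
      · push_neg at ha
        rw [claimB a ha.1 ha.2]
        refine Or.inl ⟨⟨a, rfl⟩, ?_, ?_⟩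
        · intro hBi
          have : i ∈ {k | sameTable c a k} := hBi ▸ reflS c i
          exact ha.1 this
        · intro hBj
          have : j ∈ {k | sameTable c a k} := hBj ▸ reflS c j
          exact ha.2 this
    · rintro (⟨⟨a, rfl⟩, hBi, hBj⟩ | hB)
      · have hai : ¬ sameTable c a i := fun h => hBi (class_eq h)
        have haj : ¬ sameTable c a j := fun h => hBj (class_eq h)
        exact ⟨a, (claimB a hai haj).symm⟩
      · exact ⟨i, hB ▸ (claimA i (Or.inl (reflS c i))).symm⟩
end
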